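/- arXiv:1409.5027 — 11 statements merged into one kernel-verified Lean document; each statement's English description precedes it below -/
import Mathlib

section
/- Let k be a finite field and d ≥ 2 an integer. The set of column-finite d-automatic ℕ × ℕ matrices over k is a k-subalgebra of the algebra of column-finite matrices: it contains the identity matrix and is closed under scalar multiplication, addition, and matrix multiplication. -/
/-- A matrix `A : ℕ × ℕ → k` is column-finite if every column has finitely many
nonzero entries. -/
def ColumnFinite {k : Type*} [Zero k] (A : ℕ → ℕ → k) : Prop :=
  ∀ j : ℕ, {i : ℕ | A i j ≠ 0}.Finite

/-- The `(i,j)` `d`-decimation of a matrix: `Ξ_d(A)_{ij}(r,s) = A (i + d·r) (j + d·s)`. -/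
def matDecimation {k : Type*} (d i j : ℕ) (A : ℕ → ℕ → k) : ℕ → ℕ → k :=
  fun r s => A (i + d * r) (j + d * s)

/-- A matrix is `d`-automatic if it belongs to a finite set of matrices closed under
taking all `d`-decimations. -/
def MatIsAutomatic {k : Type*} (d : ℕ) (A : ℕ → ℕ → k) : Prop :=
  ∃ S : Set (ℕ → ℕ → k), S.Finite ∧ A ∈ S ∧
    ∀ B ∈ S, ∀ i < d, ∀ j < d, matDecimation d i j B ∈ S

/-- Product of `ℕ × ℕ` matrices, using `finsum` (a finite sum whenever the matrices are
column-finite). -/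
noncomputable def matProd {k : Type*} [Field k] (A B : ℕ → ℕ → k) : ℕ → ℕ → k :=
  fun i j => ∑ᶠ r : ℕ, A i r * B r j

/-!
Decimation commutes with entrywise operations, so if `S` and `T` are finite decimation-closed
sets containing `A` and `B`, then `{c • X | X ∈ S}` and `{X + Y | X ∈ S, Y ∈ T}` witness that
`c • A` and `A + B` are automatic. For the product, splitting the summation index by its residue
mod `d` gives `Ξ_d(AB)_{ij} = ∑_m Ξ_d(A)_{im} Ξ_d(B)_{mj}` when `B` is column-finite. Hence, with
`T` shrunk to its column-finite members, the `k`-span of `{CD | C ∈ S, D ∈ T}` is closed under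
decimation; it contains `AB` and is finite because `k` is.
-/

theorem Nat.add_mul_eq_add_mul_iff {d i j r s : ℕ} (hi : i < d) (hj : j < d) :
    i + d * r = j + d * s ↔ i = j ∧ r = s := by
  refine ⟨fun h => ?_, fun ⟨hij, hrs⟩ => hij ▸ hrs ▸ rfl⟩
  have hmod := congrArg (· % d) h
  have hdiv := congrArg (· / d) h
  simp only [Nat.add_mul_mod_self_left, Nat.mod_eq_of_lt hi, Nat.mod_eq_of_lt hj] at hmod
  simp only [Nat.add_mul_div_left _ _ (Nat.zero_lt_of_lt hi), Nat.div_eq_of_lt hi,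
    Nat.div_eq_of_lt hj] at hdiv
  omega

theorem finsum_eq_sum_range_finsum_add_mul {M : Type*} [AddCommMonoid M] {d : ℕ} (hd : 0 < d)
    {f : ℕ → M} (hf : (Function.support f).Finite) :
    ∑ᶠ t, f t = ∑ m ∈ Finset.range d, ∑ᶠ u, f (m + d * u) := by
  have : NeZero d := ⟨hd.ne'⟩
  let e : Fin d × ℕ ≃ ℕ := (Equiv.prodComm _ _).trans (Nat.divModEquiv d).symm
  have he : ∀ p, e p = p.1 + d * p.2 := fun p => by
    simp only [e, Equiv.trans_apply, Equiv.prodComm_apply, Prod.fst_swap, Prod.snd_swap,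
      Nat.divModEquiv_symm_apply]
    ring
  rw [← finsum_comp_equiv e, finsum_curry _ (hf.preimage e.injective.injOn),
    finsum_eq_sum_of_fintype, ← Fin.sum_univ_eq_sum_range (fun m => ∑ᶠ u, f (m + d * u))]
  simp only [he]

section

variable {k k' k'' : Type*}

theorem ColumnFinite.map [Zero k] [Zero k'] {A : ℕ → ℕ → k} (hA : ColumnFinite A)
    {f : k → k'} (hf : f 0 = 0) : ColumnFinite (fun i j => f (A i j)) := fun j =>
  (hA j).subset fun i hi h => hi (by simp only at h ⊢; rw [h, hf])

theorem ColumnFinite.map₂ [Zero k] [Zero k'] [Zero k''] {A : ℕ → ℕ → k} {B : ℕ → ℕ → k'}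
    (hA : ColumnFinite A) (hB : ColumnFinite B) {f : k → k' → k''} (hf : f 0 0 = 0) :
    ColumnFinite (fun i j => f (A i j) (B i j)) := fun j =>
  ((hA j).union (hB j)).subset fun i hi => by
    by_contra h
    simp only [Set.mem_union, Set.mem_ofPred_eq, not_or, not_not] at h hi
    exact hi (by rw [h.1, h.2, hf])

theorem ColumnFinite.matDecimation [Zero k] {A : ℕ → ℕ → k} (hA : ColumnFinite A) {d : ℕ}
    (hd : 0 < d) (i j : ℕ) : ColumnFinite (matDecimation d i j A) := fun s =>
  (hA (j + d * s)).preimage fun _ _ _ _ h =>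
    Nat.eq_of_mul_eq_mul_left hd (Nat.add_left_cancel h)

theorem columnFinite_one [Zero k] [One k] :
    ColumnFinite (fun i j : ℕ => if i = j then (1 : k) else 0) := fun j =>
  (Set.finite_singleton j).subset fun i hi => by
    by_contra h
    exact hi (if_neg h)

theorem ColumnFinite.matProd [Field k] {A B : ℕ → ℕ → k} (hA : ColumnFinite A)
    (hB : ColumnFinite B) : ColumnFinite (matProd A B) := fun j =>
  ((hB j).biUnion fun r _ => hA r).subset fun i hi => by
    obtain ⟨r, hr⟩ : ∃ r, A i r * B r j ≠ 0 := by
      by_contra! h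
      exact hi (finsum_eq_zero_of_forall_eq_zero h)
    exact Set.mem_biUnion (right_ne_zero_of_mul hr) (left_ne_zero_of_mul hr)

theorem matDecimation_one [Zero k] [One k] {d i j : ℕ} (hi : i < d) (hj : j < d) :
    matDecimation d i j (fun i j : ℕ => if i = j then (1 : k) else 0) =
      if i = j then (fun i j : ℕ => if i = j then (1 : k) else 0) else 0 := by
  ext r s
  simp only [matDecimation, Nat.add_mul_eq_add_mul_iff hi hj]
  by_cases hij : i = j <;> simp [hij]

theorem matDecimation_matProd [Field k] {A B : ℕ → ℕ → k} (hB : ColumnFinite B) {d : ℕ}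
    (hd : 0 < d) (i j : ℕ) :
    matDecimation d i j (matProd A B) =
      ∑ m ∈ Finset.range d, matProd (matDecimation d i m A) (matDecimation d m j B) := by
  ext r s
  simp only [Finset.sum_apply]
  exact finsum_eq_sum_range_finsum_add_mul hd
    ((hB (j + d * s)).subset fun _ ht => right_ne_zero_of_mul ht)

section MatIsAutomatic

variable {d : ℕ}

theorem matIsAutomatic_one [Zero k] [One k] :
    MatIsAutomatic d (fun i j : ℕ => if i = j then (1 : k) else 0) := by
  refine ⟨{fun i j => if i = j then 1 else 0, 0}, Set.toFinite _, Set.mem_insert _ _, ?_⟩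
  rintro B (rfl | rfl) i hi j hj
  · rw [matDecimation_one hi hj]
    split_ifs
    exacts [Set.mem_insert _ _, Set.mem_insert_of_mem _ rfl]
  · exact Set.mem_insert_of_mem _ rfl

theorem MatIsAutomatic.map {A : ℕ → ℕ → k} (hA : MatIsAutomatic d A) (f : k → k') :
    MatIsAutomatic d (fun i j => f (A i j)) := by
  obtain ⟨S, hS, hAS, hcl⟩ := hA
  refine ⟨(fun X i j => f (X i j)) '' S, hS.image _, Set.mem_image_of_mem _ hAS, ?_⟩
  rintro _ ⟨X, hX, rfl⟩ i hi j hj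
  exact Set.mem_image_of_mem _ (hcl X hX i hi j hj)

theorem MatIsAutomatic.map₂ {A : ℕ → ℕ → k} {B : ℕ → ℕ → k'} (hA : MatIsAutomatic d A)
    (hB : MatIsAutomatic d B) (f : k → k' → k'') :
    MatIsAutomatic d (fun i j => f (A i j) (B i j)) := by
  obtain ⟨S, hS, hAS, hScl⟩ := hA
  obtain ⟨T, hT, hBT, hTcl⟩ := hB
  refine ⟨Set.image2 (fun X Y i j => f (X i j) (Y i j)) S T, hS.image2 _ hT,
    Set.mem_image2_of_mem hAS hBT, ?_⟩
  rintro _ ⟨X, hX, Y, hY, rfl⟩ i hi j hj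
  exact Set.mem_image2_of_mem (hScl X hX i hi j hj) (hTcl Y hY i hi j hj)

theorem MatIsAutomatic.exists_finite_closed_columnFinite [Zero k] {A : ℕ → ℕ → k}
    (hA : MatIsAutomatic d A) (hA' : ColumnFinite A) :
    ∃ S : Set (ℕ → ℕ → k), S.Finite ∧ A ∈ S ∧
      (∀ B ∈ S, ∀ i < d, ∀ j < d, matDecimation d i j B ∈ S) ∧ ∀ B ∈ S, ColumnFinite B := by
  obtain ⟨S, hS, hAS, hcl⟩ := hA
  refine ⟨{B ∈ S | ColumnFinite B}, hS.sep _, ⟨hAS, hA'⟩, ?_, fun B hB => hB.2⟩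
  rintro B ⟨hBS, hB⟩ i hi j hj
  exact ⟨hcl B hBS i hi j hj, hB.matDecimation (Nat.zero_lt_of_lt hi) i j⟩

theorem matIsAutomatic_of_mem_span [Field k] [Finite k] {P : Set (ℕ → ℕ → k)} (hP : P.Finite)
    (hcl : ∀ B ∈ P, ∀ i < d, ∀ j < d, matDecimation d i j B ∈ Submodule.span k P)
    {A : ℕ → ℕ → k} (hA : A ∈ Submodule.span k P) : MatIsAutomatic d A := by
  have : Module.Finite k (Submodule.span k P) := Module.Finite.span_of_finite k hP
  have : Finite (Submodule.span k P) := Module.finite_of_finite k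
  refine ⟨Submodule.span k P, Set.toFinite _, hA, fun B hB i hi j hj => ?_⟩
  -- `matDecimation d i j` is `k`-linear (definitionally).
  induction hB using Submodule.span_induction with
  | mem B hB => exact hcl B hB i hi j hj
  | zero => exact Submodule.zero_mem _
  | add X Y _ _ hX hY => exact Submodule.add_mem _ hX hY
  | smul c X _ hX => exact Submodule.smul_mem _ c hX

theorem MatIsAutomatic.matProd [Field k] [Finite k] {A B : ℕ → ℕ → k}
    (hA : MatIsAutomatic d A) (hB : MatIsAutomatic d B) (hB' : ColumnFinite B) :
    MatIsAutomatic d (matProd A B) := by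
  obtain ⟨S, hS, hAS, hScl⟩ := hA
  obtain ⟨T, hT, hBT, hTcl, hTcf⟩ := hB.exists_finite_closed_columnFinite hB'
  refine matIsAutomatic_of_mem_span (hS.image2 _ hT) ?_
    (Submodule.subset_span (Set.mem_image2_of_mem hAS hBT))
  rintro _ ⟨C, hC, D, hD, rfl⟩ i hi j hj
  rw [matDecimation_matProd (hTcf D hD) (Nat.zero_lt_of_lt hi)]
  exact Submodule.sum_mem _ fun m hm => Submodule.subset_span <|
    Set.mem_image2_of_mem (hScl C hC i hi m (Finset.mem_range.1 hm))
      (hTcl D hD m (Finset.mem_range.1 hm) j hj)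

end MatIsAutomatic

end

theorem automatic_matrices_subalgebra_general
    (k : Type*) [Field k] [Fintype k] (d : ℕ) :
    (ColumnFinite (fun i j : ℕ => if i = j then (1 : k) else 0) ∧
      MatIsAutomatic d (fun i j : ℕ => if i = j then (1 : k) else 0)) ∧
    (∀ (c : k) (A : ℕ → ℕ → k), ColumnFinite A → MatIsAutomatic d A →
      ColumnFinite (fun i j => c * A i j) ∧ MatIsAutomatic d (fun i j => c * A i j)) ∧
    (∀ A B : ℕ → ℕ → k, ColumnFinite A → MatIsAutomatic d A →
      ColumnFinite B → MatIsAutomatic d B →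
      (ColumnFinite (fun i j => A i j + B i j) ∧
        MatIsAutomatic d (fun i j => A i j + B i j)) ∧
      (ColumnFinite (matProd A B) ∧ MatIsAutomatic d (matProd A B))) :=
  ⟨⟨columnFinite_one, matIsAutomatic_one⟩,
    fun c _ hA hA' => ⟨hA.map (mul_zero c), hA'.map (c * ·)⟩,
    fun _ _ hA hA' hB hB' =>
      ⟨⟨hA.map₂ hB (add_zero 0), hA'.map₂ hB' (· + ·)⟩, hA.matProd hB, hA'.matProd hB' hB⟩⟩

/-- over a finite field `k`, for `d ≥ 2`, the column-finite `d`-automatic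
matrices form a `k`-subalgebra of the algebra of column-finite matrices: the set contains
the identity matrix and is closed under scalar multiplication, addition, and matrix
multiplication. -/
theorem automatic_matrices_subalgebra
    (k : Type*) [Field k] [Fintype k] (d : ℕ) (hd : 2 ≤ d) :
    (ColumnFinite (fun i j : ℕ => if i = j then (1 : k) else 0) ∧
      MatIsAutomatic d (fun i j : ℕ => if i = j then (1 : k) else 0)) ∧
    (∀ (c : k) (A : ℕ → ℕ → k), ColumnFinite A → MatIsAutomatic d A →
      ColumnFinite (fun i j => c * A i j) ∧ MatIsAutomatic d (fun i j => c * A i j)) ∧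
    (∀ A B : ℕ → ℕ → k, ColumnFinite A → MatIsAutomatic d A →
      ColumnFinite B → MatIsAutomatic d B →
      (ColumnFinite (fun i j => A i j + B i j) ∧
        MatIsAutomatic d (fun i j => A i j + B i j)) ∧
      (ColumnFinite (matProd A B) ∧ MatIsAutomatic d (matProd A B))) :=
  automatic_matrices_subalgebra_general k d
end

section
/- If ψ and φ are synchronously automatic homeomorphisms of X^ω, then the composition ψ ∘ φ and the inverse ψ⁻¹ are synchronously automatic; consequently the set of all synchronously automatic homeomorphisms of X^ω is a group under composition. -/
/-- Prepend a finite word `v` to an infinite sequence `w`. -/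
def prependWord {X : Type*} (v : List X) (w : ℕ → X) : ℕ → X :=
  fun n => if h : n < v.length then v.get ⟨n, h⟩ else w (n - v.length)

/-- The partial map `ψ_{u,v}` of a map `ψ : X^ω → X^ω`, viewed as the set of pairs
`(w, w')` with `ψ (v·w) = u·w'`. -/
def partialMap {X : Type*} (ψ : (ℕ → X) → (ℕ → X)) (u v : List X) :
    Set ((ℕ → X) × (ℕ → X)) :=
  {p | ψ (prependWord v p.1) = prependWord u p.2}

/-- A homeomorphism `ψ` of `X^ω` is synchronously automatic if the set of the partial maps
`ψ_{u,v}`, over all pairs of finite words `u, v` of equal length, is finite. -/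
def SyncAutomatic {X : Type*} [TopologicalSpace X] (ψ : (ℕ → X) ≃ₜ (ℕ → X)) : Prop :=
  {S : Set ((ℕ → X) × (ℕ → X)) |
    ∃ u v : List X, u.length = v.length ∧ S = partialMap (⇑ψ) u v}.Finite

/-!
A pair `(w, w'')` lies in `(ψ ∘ φ)_{u,v}` exactly when, with `t` the prefix of length `|v|` of
`φ (v·w)` and `w'` the rest, `(w, w') ∈ φ_{t,v}` and `(w', w'') ∈ ψ_{u,t}`. Hence every partial
map of `ψ ∘ φ` is a union of relational composites `φ_{t,v} ○ ψ_{u,t}`, so it is determined by a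
subset of the finite set of pairs (partial map of `φ`, partial map of `ψ`). Likewise
`(ψ⁻¹)_{u,v}` is the converse relation of `ψ_{v,u}`.
-/

open SetRel

namespace SyncAutomatic

variable {X : Type*}

lemma prependWord_ofFn_shift (n : ℕ) (s : ℕ → X) :
    prependWord (List.ofFn fun i : Fin n => s i) (fun k => s (k + n)) = s := by
  funext m
  simp only [prependWord, List.length_ofFn]
  split_ifs with h
  · simp
  · simp [Nat.sub_add_cancel (Nat.le_of_not_lt h)]

def partialMaps (f : (ℕ → X) → (ℕ → X)) : Set (SetRel (ℕ → X) (ℕ → X)) :=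
  {S | ∃ u v : List X, u.length = v.length ∧ S = partialMap f u v}

lemma partialMap_comp (f g : (ℕ → X) → (ℕ → X)) (u v : List X) :
    partialMap (g ∘ f) u v =
      ⋃ t ∈ {t : List X | t.length = v.length}, partialMap f t v ○ partialMap g u t := by
  ext ⟨w, w''⟩
  simp only [partialMap, Set.mem_iUnion, Set.mem_ofPred_eq, mem_comp, Function.comp_apply,
    exists_prop]
  constructor
  · intro h
    set s := f (prependWord v w)
    refine ⟨List.ofFn fun i : Fin v.length => s i, List.length_ofFn, fun k => s (k + v.length),
      ?_, ?_⟩ <;> rw [prependWord_ofFn_shift]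
    exact h
  · rintro ⟨t, -, w', hf, hg⟩
    rw [hf, hg]

lemma partialMap_symm (e : (ℕ → X) ≃ (ℕ → X)) (u v : List X) :
    partialMap e.symm u v = SetRel.inv (partialMap e v u) := by
  ext ⟨w, w'⟩
  simp only [partialMap, mem_inv, Set.mem_ofPred_eq]
  exact e.symm_apply_eq.trans eq_comm

lemma finite_partialMaps_comp {f g : (ℕ → X) → (ℕ → X)} (hf : (partialMaps f).Finite)
    (hg : (partialMaps g).Finite) : (partialMaps (g ∘ f)).Finite := by
  refine (((hf.prod hg).finite_subsets).image fun T => ⋃ p ∈ T, p.1 ○ p.2).subset ?_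
  rintro S ⟨u, v, huv, rfl⟩
  refine ⟨(fun t => (partialMap f t v, partialMap g u t)) '' {t | t.length = v.length}, ?_, ?_⟩
  · rintro _ ⟨t, ht, rfl⟩
    exact ⟨⟨t, v, ht, rfl⟩, ⟨u, t, huv.trans ht.symm, rfl⟩⟩
  · simp only [Set.biUnion_image, partialMap_comp]

lemma finite_partialMaps_symm {e : (ℕ → X) ≃ (ℕ → X)} (he : (partialMaps e).Finite) :
    (partialMaps e.symm).Finite := by
  refine (he.image SetRel.inv).subset ?_
  rintro S ⟨u, v, huv, rfl⟩
  exact ⟨partialMap e v u, ⟨v, u, huv.symm, rfl⟩, (partialMap_symm e u v).symm⟩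

end SyncAutomatic

open SyncAutomatic in
theorem syncAutomatic_comp_and_inv_general
    {X : Type*} [TopologicalSpace X]
    (ψ φ : (ℕ → X) ≃ₜ (ℕ → X)) (hψ : SyncAutomatic ψ) (hφ : SyncAutomatic φ) :
    SyncAutomatic (φ.trans ψ) ∧ SyncAutomatic ψ.symm :=
  ⟨finite_partialMaps_comp (f := φ) (g := ψ) hφ hψ,
    finite_partialMaps_symm (e := ψ.toEquiv) hψ⟩

/-- if `ψ` and `φ` are synchronously automatic homeomorphisms of `X^ω`, then
the composition `ψ ∘ φ` and the inverse `ψ⁻¹` are synchronously automatic; consequently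
the set of synchronously automatic homeomorphisms of `X^ω` is a group under composition. -/
theorem syncAutomatic_comp_and_inv
    {X : Type*} [Fintype X] [TopologicalSpace X] [DiscreteTopology X]
    (hX : 2 ≤ Fintype.card X)
    (ψ φ : (ℕ → X) ≃ₜ (ℕ → X)) (hψ : SyncAutomatic ψ) (hφ : SyncAutomatic φ) :
    SyncAutomatic (φ.trans ψ) ∧ SyncAutomatic ψ.symm :=
  syncAutomatic_comp_and_inv_general ψ φ hψ hφ
end

section
/- Let A = {v_1, …, v_n} and B = {u_1, …, u_n} be two cross-sections in X^* of the same cardinality, and let ψ be the homeomorphism of X^ω defined by ψ(v_i·w) = u_i·w for all i and all w ∈ X^ω. Then ψ is synchronously automatic. Consequently, every element of the Higman–Thompson group V_{|X|} is a synchronously automatic homeomorphism of X^ω. -/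
/-- The cylinder `v·X^ω` determined by a finite word `v`. -/
def cylinder {X : Type*} (v : List X) : Set (ℕ → X) :=
  Set.range (prependWord v)

/-! A word `b` longer than every `v i` has some `v i` as a prefix (the cylinders cover), so
`b = v i ++ c` and `ψ (b·w) = (u i ++ c)·w`: the partial map `ψ_{a,b}` is the partial map
`id_{a, u i ++ c}` of the identity. Cancelling the common prefix of `a` and `u i ++ c` leaves
`∅` or `id_{a',e'}` with one of `a'`, `e'` empty and the other of length at most
`max |v i| |u i|`, because `|a| = |b|`. So only finitely many partial maps occur. -/

section

variable {X : Type*}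

lemma prependWord_of_lt (v : List X) (w : ℕ → X) {i : ℕ} (h : i < v.length) :
    prependWord v w i = v[i] := dif_pos h

lemma prependWord_of_le (v : List X) (w : ℕ → X) {i : ℕ} (h : v.length ≤ i) :
    prependWord v w i = w (i - v.length) := dif_neg (Nat.not_lt.2 h)

lemma prependWord_append (a b : List X) (w : ℕ → X) :
    prependWord (a ++ b) w = prependWord a (prependWord b w) := by
  funext i
  rcases lt_or_ge i a.length with h | h
  · rw [prependWord_of_lt a _ h, prependWord_of_lt (a ++ b) w (by simp; omega),
      List.getElem_append_left h]
  · rw [prependWord_of_le a _ h]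
    rcases lt_or_ge i (a.length + b.length) with h2 | h2
    · rw [prependWord_of_lt (a ++ b) w (by simpa using h2), prependWord_of_lt b _ (by omega)]
      simp [List.getElem_append_right, h]
    · rw [prependWord_of_le (a ++ b) w (by simpa using h2), prependWord_of_le b _ (by omega)]
      congr 1
      simp only [List.length_append]
      omega

lemma prependWord_injective (v : List X) : Function.Injective (prependWord v) := by
  intro w w' h
  funext i
  simpa [prependWord_of_le] using congrFun h (i + v.length)

lemma List.IsPrefix.of_prependWord_eq {a b : List X} {w w' : ℕ → X}
    (h : prependWord a w = prependWord b w') (hle : a.length ≤ b.length) : a <+: b := by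
  refine List.prefix_iff_eq_take.2 (List.ext_getElem (by simp [hle]) fun i h1 _ => ?_)
  have := congrFun h i
  rw [prependWord_of_lt a w h1, prependWord_of_lt b w' (h1.trans_le hle)] at this
  simpa using this

lemma exists_eq_append_of_iUnion_cylinder_eq_univ {ι : Type*} {v : ι → List X}
    (hcover : ⋃ i, cylinder (v i) = Set.univ) (w : ℕ → X) {b : List X}
    (hb : ∀ i, (v i).length ≤ b.length) : ∃ i c, b = v i ++ c := by
  obtain ⟨i, w', hw'⟩ := Set.mem_iUnion.1 (hcover ▸ Set.mem_univ (prependWord b w))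
  obtain ⟨c, hc⟩ := List.IsPrefix.of_prependWord_eq hw' (hb i)
  exact ⟨i, c, hc.symm⟩

lemma partialMap_eq_partialMap_id {ψ : (ℕ → X) → (ℕ → X)} {b e : List X}
    (h : ∀ w, ψ (prependWord b w) = prependWord e w) (a : List X) :
    partialMap ψ a b = partialMap id a e := by
  ext p
  simp [partialMap, h]

lemma partialMap_id_append (c a e : List X) :
    partialMap id (c ++ a) (c ++ e) = partialMap id a e := by
  ext p
  simp only [partialMap, Set.mem_ofPred_eq, id, prependWord_append]
  exact (prependWord_injective c).eq_iff

/-- The bounds use truncated subtraction: one of them is `0`, so one of `a'`, `e'` is empty. -/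
lemma partialMap_id_eq_empty_or_reduce (a e : List X) :
    partialMap id a e = ∅ ∨ ∃ a' e', a'.length ≤ a.length - e.length ∧
      e'.length ≤ e.length - a.length ∧ partialMap id a e = partialMap id a' e' := by
  rcases (partialMap id a e).eq_empty_or_nonempty with hempty | ⟨p, hp⟩
  · exact Or.inl hempty
  right
  rcases le_total e.length a.length with hle | hle
  · obtain ⟨d, rfl⟩ := List.IsPrefix.of_prependWord_eq hp hle
    refine ⟨d, [], by simp, by simp, ?_⟩
    simpa using partialMap_id_append e d []
  · obtain ⟨d, rfl⟩ := List.IsPrefix.of_prependWord_eq hp.symm hle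
    refine ⟨[], d, by simp, by simp, ?_⟩
    simpa using partialMap_id_append a [] d

end

theorem higmanThompson_syncAutomatic_general
    {X : Type*} [Fintype X] [TopologicalSpace X]
    (n : ℕ) (v u : Fin n → List X)
    (hvcover : (⋃ i : Fin n, cylinder (v i)) = Set.univ)
    (ψ : (ℕ → X) ≃ₜ (ℕ → X))
    (hψ : ∀ (i : Fin n) (w : ℕ → X), ψ (prependWord (v i) w) = prependWord (u i) w) :
    SyncAutomatic ψ := by
  obtain ⟨M, hM⟩ := Finite.exists_le fun i => max (v i).length (u i).length
  simp only [max_le_iff] at hM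
  have hW := List.finite_length_le X M
  refine (((hW.image2 (partialMap ψ) hW).union (hW.image2 (partialMap id) hW)).insert ∅).subset ?_
  rintro S ⟨a, b, hab, rfl⟩
  rcases (partialMap ψ a b).eq_empty_or_nonempty with hempty | ⟨p, -⟩
  · exact Or.inl hempty
  by_cases hb : b.length ≤ M
  · exact Or.inr (Or.inl (Set.mem_image2_of_mem (show a.length ≤ M by omega) hb))
  obtain ⟨i, c, rfl⟩ := exists_eq_append_of_iUnion_cylinder_eq_univ hvcover (prependWord b p.1)
    fun i => (hM i).1.trans (not_le.1 hb).le
  rw [partialMap_eq_partialMap_id (e := u i ++ c) fun w => by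
    rw [prependWord_append, hψ, ← prependWord_append]]
  obtain hempty | ⟨a', e', ha', he', hS⟩ := partialMap_id_eq_empty_or_reduce a (u i ++ c)
  · exact Or.inl hempty
  · obtain ⟨hv, hu⟩ := hM i
    simp only [List.length_append] at hab ha' he'
    exact Or.inr (Or.inr (hS ▸ Set.mem_image2_of_mem
      (show a'.length ≤ M by omega) (show e'.length ≤ M by omega)))

/-- let `v_1, …, v_n` and `u_1, …, u_n` be two cross-sections of `X^ω`
(families of finite words whose cylinders are pairwise disjoint and cover `X^ω`), and let
`ψ` be the homeomorphism of `X^ω` with `ψ(v_i·w) = u_i·w` for all `i` and `w`. Then `ψ` is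
synchronously automatic. Consequently, every element of the Higman–Thompson group
`V_{|X|}` is a synchronously automatic homeomorphism of `X^ω`. -/
theorem higmanThompson_syncAutomatic
    {X : Type*} [Fintype X] [TopologicalSpace X] [DiscreteTopology X]
    (hX : 2 ≤ Fintype.card X)
    (n : ℕ) (v u : Fin n → List X)
    (hvdisj : ∀ i j : Fin n, i ≠ j → Disjoint (cylinder (v i)) (cylinder (v j)))
    (hvcover : (⋃ i : Fin n, cylinder (v i)) = Set.univ)
    (hudisj : ∀ i j : Fin n, i ≠ j → Disjoint (cylinder (u i)) (cylinder (u j)))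
    (hucover : (⋃ i : Fin n, cylinder (u i)) = Set.univ)
    (ψ : (ℕ → X) ≃ₜ (ℕ → X))
    (hψ : ∀ (i : Fin n) (w : ℕ → X), ψ (prependWord (v i) w) = prependWord (u i) w) :
    SyncAutomatic ψ :=
  higmanThompson_syncAutomatic_general n v u hvcover ψ hψ
end

section
/- Let p be a prime and n ≥ 1. Let P be the set of permutations π of the finite set (Fin n → ZMod p) for which there exists a family of functions a_i : (Fin i → ZMod p) → ZMod p, 0 ≤ i < n, with (π x)_i = x_i + a_i(x_0, …, x_{i−1}) for all x and i. Then P is a subgroup of the symmetric group on (Fin n → ZMod p), its cardinality is p^{(p^n − 1)/(p − 1)}, the p-adic valuation of (p^n)! equals (p^n − 1)/(p − 1), and hence P is a Sylow p-subgroup of the symmetric group on (Fin n → ZMod p). -/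
/-!
A triangular map `x ↦ (x_i + a_i(x_0, …, x_{i-1}))_i` of `Fin n → G` is injective (recover `x_i`
by induction on `i`), hence a permutation when `G` is finite. Triangular maps are closed under
composition, and a submonoid of a finite group is a subgroup. Distinct families `a` give distinct
maps, so the group has `∏_{i<n} |G| ^ |G|^i` elements; for `G = ZMod p` this is
`p ^ (1 + p + ⋯ + p^(n-1))`. By Legendre, `(p - 1) v_p(m!) = m - s_p(m)`, and the digit sum
`s_p(p^n)` is `1`, so this is exactly the `p`-part of `(p^n)!`.
-/

theorem Submonoid.inv_mem_of_finite {H : Type*} [Group H] [Finite H] (M : Submonoid H) {x : H}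
    (hx : x ∈ M) : x⁻¹ ∈ M := by
  obtain ⟨k, hk⟩ := (isOfFinOrder_of_finite x).mem_powers_iff_mem_zpowers.mpr
    (Subgroup.inv_mem _ (Subgroup.mem_zpowers x))
  exact hk ▸ pow_mem hx k

theorem padicValNat_factorial_prime_pow {p : ℕ} [hp : Fact p.Prime] (n : ℕ) :
    padicValNat p (p ^ n).factorial = (p ^ n - 1) / (p - 1) := by
  have hdigits : (p.digits (p ^ n)).sum = 1 := by
    simpa [Nat.digits_of_lt p 1 one_ne_zero hp.out.one_lt] using
      congrArg List.sum (Nat.digits_base_pow_mul hp.out.one_lt one_pos (k := n))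
  refine (Nat.div_eq_of_eq_mul_left (by have := hp.out.two_le; omega) ?_).symm
  rw [mul_comm, sub_one_mul_padicValNat_factorial, hdigits]

namespace Kaloujnine

variable {G : Type*} {n : ℕ}

abbrev TriangularData (G : Type*) (n : ℕ) := (i : Fin n) → (Fin i → G) → G

def triangularMap [Add G] (a : TriangularData G n) (x : Fin n → G) : Fin n → G :=
  fun i => x i + a i (Fin.take i i.isLt.le x)

def TriangularData.restrict (a : TriangularData G n) (m : ℕ) (h : m ≤ n) :
    TriangularData G m :=
  fun j => a (Fin.castLE h j)

theorem take_triangularMap [Add G] (a : TriangularData G n) {m : ℕ} (h : m ≤ n)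
    (x : Fin n → G) :
    Fin.take m h (triangularMap a x) = triangularMap (a.restrict m h) (Fin.take m h x) :=
  rfl

theorem triangularMap_injective [Add G] [IsRightCancelAdd G] (a : TriangularData G n) :
    Function.Injective (triangularMap a) := by
  intro x y hxy
  funext i
  induction i using WellFoundedLT.induction with
  | _ i ih =>
    have htake : Fin.take i i.isLt.le x = Fin.take i i.isLt.le y :=
      funext fun j => ih _ j.isLt
    have hi := congrFun hxy i
    simp only [triangularMap, htake] at hi
    exact add_right_cancel hi

theorem triangularMap_left_injective [Add G] [IsLeftCancelAdd G] [Nonempty G] :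
    Function.Injective (triangularMap : TriangularData G n → _) := by
  intro a b hab
  funext i y
  let x : Fin n → G := fun k => if hk : (k : ℕ) < i then y ⟨k, hk⟩ else Classical.arbitrary G
  have htake : Fin.take i i.isLt.le x = y := funext fun j => dif_pos j.isLt
  have hi := congrFun (congrFun hab x) i
  simp only [triangularMap, htake] at hi
  exact add_left_cancel hi

theorem triangularMap_comp [AddSemigroup G] (a b : TriangularData G n) :
    triangularMap a ∘ triangularMap b =
      triangularMap fun i y => b i y + a i (triangularMap (b.restrict i i.isLt.le) y) := by
  funext x i
  simp only [Function.comp_apply, triangularMap, take_triangularMap, add_assoc]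

theorem triangularMap_zero [AddZeroClass G] : triangularMap (0 : TriangularData G n) = id := by
  funext x i
  simp [triangularMap]

theorem card_triangularData [Finite G] :
    Nat.card (TriangularData G n) = ∏ i : Fin n, Nat.card G ^ Nat.card G ^ (i : ℕ) := by
  simp [Nat.card_pi, Nat.card_fun]

section Group

variable [AddGroup G] [Finite G]

noncomputable def triangularPerm (a : TriangularData G n) : Equiv.Perm (Fin n → G) :=
  Equiv.ofBijective _ (Finite.injective_iff_bijective.mp (triangularMap_injective a))

theorem coe_triangularPerm (a : TriangularData G n) : ⇑(triangularPerm a) = triangularMap a :=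
  rfl

theorem triangularPerm_injective :
    Function.Injective (triangularPerm : TriangularData G n → _) :=
  fun _ _ h => triangularMap_left_injective (congrArg DFunLike.coe h)

variable (G n) in
noncomputable def submonoid : Submonoid (Equiv.Perm (Fin n → G)) where
  carrier := Set.range triangularPerm
  one_mem' := ⟨0, DFunLike.coe_injective triangularMap_zero⟩
  mul_mem' := by
    rintro _ _ ⟨a, rfl⟩ ⟨b, rfl⟩
    exact ⟨_, DFunLike.coe_injective <|
      (coe_triangularPerm _).trans (triangularMap_comp a b).symm⟩

variable (G n) in
noncomputable def subgroup : Subgroup (Equiv.Perm (Fin n → G)) :=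
  { submonoid G n with inv_mem' := (submonoid G n).inv_mem_of_finite }

theorem mem_subgroup_iff {π : Equiv.Perm (Fin n → G)} :
    π ∈ subgroup G n ↔ ∃ a, ⇑π = triangularMap a :=
  exists_congr fun _ => DFunLike.coe_fn_eq.symm.trans eq_comm

theorem card_subgroup :
    Nat.card (subgroup G n) = ∏ i : Fin n, Nat.card G ^ Nat.card G ^ (i : ℕ) :=
  (Nat.card_range_of_injective triangularPerm_injective).trans card_triangularData

end Group

theorem card_subgroup_zmod {p : ℕ} [hp : Fact p.Prime] (n : ℕ) :
    Nat.card (subgroup (ZMod p) n) = p ^ ((p ^ n - 1) / (p - 1)) := by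
  rw [card_subgroup, Nat.card_zmod, Finset.prod_pow_eq_pow_sum,
    Fin.sum_univ_eq_sum_range (p ^ ·), Nat.geomSum_eq hp.out.two_le]

end Kaloujnine

theorem kaloujnine_sylow_general (p : ℕ) (hp : p.Prime) (n : ℕ) :
    ∃ H : Subgroup (Equiv.Perm (Fin n → ZMod p)),
      (H : Set (Equiv.Perm (Fin n → ZMod p))) =
        {π : Equiv.Perm (Fin n → ZMod p) |
          ∃ a : (i : Fin n) → ((Fin (i : ℕ) → ZMod p) → ZMod p),
            ∀ (x : Fin n → ZMod p) (i : Fin n),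
              π x i = x i + a i (fun j : Fin (i : ℕ) => x ⟨(j : ℕ), j.2.trans i.2⟩)} ∧
      Nat.card H = p ^ ((p ^ n - 1) / (p - 1)) ∧
      (Nat.factorial (p ^ n)).factorization p = (p ^ n - 1) / (p - 1) ∧
      ∃ P : Sylow p (Equiv.Perm (Fin n → ZMod p)), (P : Subgroup (Equiv.Perm (Fin n → ZMod p))) = H := by
  have : Fact p.Prime := ⟨hp⟩
  have hcard := Kaloujnine.card_subgroup_zmod (p := p) n
  have hval : (p ^ n).factorial.factorization p = (p ^ n - 1) / (p - 1) := by
    rw [Nat.factorization_def _ hp, padicValNat_factorial_prime_pow]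
  have hsylow : Nat.card (Kaloujnine.subgroup (ZMod p) n) =
      p ^ (Nat.card (Equiv.Perm (Fin n → ZMod p))).factorization p := by
    rw [Nat.card_perm, Nat.card_fun, Nat.card_zmod, Nat.card_fin, hval, hcard]
  refine ⟨Kaloujnine.subgroup (ZMod p) n, ?_, hcard, hval, Sylow.ofCard _ hsylow,
    Sylow.coe_ofCard _ hsylow⟩
  ext π
  simp only [SetLike.mem_coe, Kaloujnine.mem_subgroup_iff, funext_iff]
  rfl

/-- for a prime `p` and `n ≥ 1`, the set of permutations of
`Fin n → ZMod p` of triangular form `(π x)_i = x_i + a_i(x_0, …, x_{i−1})` is a subgroup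
of the symmetric group of `Fin n → ZMod p`; its cardinality is `p ^ ((p^n − 1)/(p − 1))`,
the `p`-adic valuation of `(p^n)!` equals `(p^n − 1)/(p − 1)`, and hence this subgroup is
a Sylow `p`-subgroup of the symmetric group. -/
theorem kaloujnine_sylow (p : ℕ) (hp : p.Prime) (n : ℕ) (hn : 1 ≤ n) :
    ∃ H : Subgroup (Equiv.Perm (Fin n → ZMod p)),
      (H : Set (Equiv.Perm (Fin n → ZMod p))) =
        {π : Equiv.Perm (Fin n → ZMod p) |
          ∃ a : (i : Fin n) → ((Fin (i : ℕ) → ZMod p) → ZMod p),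
            ∀ (x : Fin n → ZMod p) (i : Fin n),
              π x i = x i + a i (fun j : Fin (i : ℕ) => x ⟨(j : ℕ), j.2.trans i.2⟩)} ∧
      Nat.card H = p ^ ((p ^ n - 1) / (p - 1)) ∧
      (Nat.factorial (p ^ n)).factorization p = (p ^ n - 1) / (p - 1) ∧
      ∃ P : Sylow p (Equiv.Perm (Fin n → ZMod p)), (P : Subgroup (Equiv.Perm (Fin n → ZMod p))) = H :=
  kaloujnine_sylow_general p hp n
end

section
/- Let p be a prime. The map α : K_p → (ℕ → ZMod p), g ↦ (α_0(g), α_1(g), α_2(g), …), is a surjective group homomorphism from K_p onto the additive group of all sequences over ZMod p, and its kernel equals the commutator subgroup of K_p. Hence α is the abelianization epimorphism K_p → K_p/[K_p, K_p] ≅ (ZMod p)^ℕ. -/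
/-- Extend a word `v ∈ (ZMod p)^n` to an infinite sequence by zeros. -/
def extendWord {p : ℕ} (n : ℕ) (v : Fin n → ZMod p) : ℕ → ZMod p :=
  fun i => if h : i < n then v ⟨i, h⟩ else 0

/-- The triangular-form predicate defining the group `K_p`: `g` has a tableau
`(a_n)` with `(g x)_n = x_n + a_n(x_0, …, x_{n−1})`. -/
def IsTriangular (p : ℕ) (g : Equiv.Perm (ℕ → ZMod p)) : Prop :=
  ∃ a : (n : ℕ) → (Fin n → ZMod p) → ZMod p,
    ∀ (x : ℕ → ZMod p) (n : ℕ), g x n = x n + a n (fun i : Fin n => x (i : ℕ))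

/-- `α_n(g) = Σ_{v ∈ (ZMod p)^n} a_n(v)`, computed from the action of `g`
(for triangular `g`, `a_n(v) = (g x̂)_n − x̂_n` for any extension `x̂` of `v`). -/
noncomputable def alphaKal (p : ℕ) [NeZero p] (g : Equiv.Perm (ℕ → ZMod p)) (n : ℕ) :
    ZMod p :=
  ∑ v : Fin n → ZMod p, (g (extendWord n v) n - extendWord n v n)

/-!
The tableau of `g * h` at level `n` is the tableau of `g` read along the bijection of
`(ZMod p)^n` induced by `h`, plus the tableau of `h`; summing gives additivity of `α`.

For the kernel: if `α_0(g) = 0` then `g` fixes `x_0` and acts on the sequences starting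
with `i` by a section `s_i ∈ K_p`, with `α_{k+1}(g) = ∑ᵢ α_k(s_i)`. Hence `s_{p-1} ⋯ s_0`
again lies in the kernel, and by induction on the depth it agrees with a product of two
commutators `c₁ c₂` on the first `n` coordinates. Putting a conjugate of `c₂` in section `0`,
`c₁` in section `-1`, and correcting the remaining sections by partial products `B_i`, the
sections of `g` become `⁅U_i, V_i⁆ B_i B_{i-1}⁻¹`; this is the section-wise form of
`⁅base U, base V⁆ * ⁅base B, σ⁆` with `σ : x_0 ↦ x_0 + 1`. So `g` agrees with a product of
two commutators up to every depth, and König's lemma on tableaux makes this exact.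
-/

open scoped commutatorElement
open Set
open Equiv (Perm)

section DescProd

variable {G : Type*} [Monoid G]

def descProd (t : ℕ → G) : ℕ → G
  | 0 => 1
  | m + 1 => t m * descProd t m

lemma map_descProd {M : Type*} [CommMonoid M] (φ : G →* M) (t : ℕ → G) (m : ℕ) :
    φ (descProd t m) = ∏ j ∈ Finset.range m, φ (t j) := by
  induction m with
  | zero => simp [descProd]
  | succ m ih => rw [descProd, map_mul, ih, Finset.prod_range_succ, mul_comm]

end DescProd

namespace Con

variable {G : Type*} [Group G] (c : Con G)

protected lemma commutatorElement {a a' b b' : G} (ha : c a a') (hb : c b b') :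
    c ⁅a, b⁆ ⁅a', b'⁆ := by
  simpa only [commutatorElement_def] using c.mul (c.mul (c.mul ha hb) (c.inv ha)) (c.inv hb)

lemma exists_commutator_mul_mul_inv_sub_one {p : ℕ} [NeZero p] (hp : 1 < p) (s : ZMod p → G)
    {u v w z : G} (h : c (descProd (fun j => s j) p) (⁅u, v⁆ * ⁅w, z⁆)) :
    ∃ U V B : ZMod p → G, ∀ i, c (⁅U i, V i⁆ * (B i * (B (i - 1))⁻¹)) (s i) := by
  have : Fact (1 < p) := ⟨hp⟩
  set P := descProd fun j : ℕ => s j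
  have val_sub_one_add_one (i : ZMod p) (hi : i ≠ 0) : (i - 1).val + 1 = i.val := by
    have := ZMod.val_pos.mpr hi
    rw [ZMod.val_sub (by rw [ZMod.val_one]; omega), ZMod.val_one]
    omega
  have P_succ_val (i : ZMod p) : P (i.val + 1) = s i * P i.val := by
    rw [show P (i.val + 1) = s (i.val : ℕ) * P i.val from rfl, ZMod.natCast_zmod_val]
  -- `B i = s i ⋯ s 0`, except that `B (-1)` absorbs `⁅u, v⁆`
  refine ⟨fun i => if i = 0 then s 0 * w * (s 0)⁻¹ else if i = -1 then u else 1,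
    fun i => if i = 0 then s 0 * z * (s 0)⁻¹ else if i = -1 then v else 1,
    fun i => if i = -1 then ⁅u, v⁆⁻¹ * P p else P (i.val + 1), fun i => ?_⟩
  have h01 : (0 : ZMod p) ≠ -1 := (neg_ne_zero.mpr one_ne_zero).symm
  by_cases hi0 : i = 0
  · subst hi0
    simp only [if_neg h01, zero_sub, ZMod.val_zero, zero_add, ↓reduceIte]
    convert c.mul (c.refl (s 0)) (c.mul (c.mul (c.refl ⁅w, z⁆) (c.inv h)) (c.refl ⁅u, v⁆))
      using 1
    · simp only [P, descProd, commutatorElement_def]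
      group
    · group
  by_cases hi1 : i = -1
  · subst hi1
    have hval : (-1 : ZMod p).val + 1 = p := by
      rw [ZMod.val_neg_of_ne_zero, ZMod.val_one]
      omega
    have hne : (-1 : ZMod p) - 1 ≠ -1 := fun h' => h01 (by linear_combination -h')
    simp only [h01.symm, hne, if_false, if_true, val_sub_one_add_one _ h01.symm]
    convert c.refl (s (-1)) using 1
    rw [show P p = s (-1) * P (-1 : ZMod p).val by rw [← P_succ_val, hval]]
    group
  · have hne : i - 1 ≠ -1 := fun h' => hi0 (by linear_combination h')
    simp only [hi0, hi1, hne, if_false, commutatorElement_one_left, one_mul,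
      val_sub_one_add_one i hi0, P_succ_val, mul_inv_cancel_right]
    exact c.refl _

end Con

lemma ZMod.sum_range_natCast {M : Type*} [AddCommMonoid M] (p : ℕ) [NeZero p]
    (F : ZMod p → M) : ∑ j ∈ Finset.range p, F j = ∑ i, F i :=
  Finset.sum_nbij' (fun j => (j : ZMod p)) ZMod.val (by simp) (by simp [ZMod.val_lt])
    (fun j hj => ZMod.val_cast_of_lt (by simpa using hj)) (fun i _ => ZMod.natCast_zmod_val i)
    (fun _ _ => rfl)

theorem nonempty_iInter_of_finite_cylinders {β : ℕ → Type*} [∀ k, Finite (β k)]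
    (C : ℕ → Set (∀ k, β k)) (hsucc : ∀ n, C (n + 1) ⊆ C n) (hne : ∀ n, (C n).Nonempty)
    (hcyl : ∀ n y y', (∀ k < n, y k = y' k) → y ∈ C n → y' ∈ C n) :
    (⋂ n, C n).Nonempty := by
  let _ : ∀ k, TopologicalSpace (β k) := fun _ => ⊥
  have : ∀ k, DiscreteTopology (β k) := fun _ => ⟨rfl⟩
  have hclosed (n : ℕ) : IsClosed (C n) := by
    let π : (∀ k, β k) → ∀ k : Fin n, β k := fun y k => y k
    have : C n = π ⁻¹' (π '' C n) := subset_antisymm (subset_preimage_image _ _)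
      fun y ⟨y', hy', hπ⟩ => hcyl n y' y (fun k hk => congrFun hπ ⟨k, hk⟩) hy'
    rw [this]
    exact (isClosed_discrete _).preimage (continuous_pi fun k => continuous_apply _)
  exact IsCompact.nonempty_iInter_of_sequence_nonempty_isCompact_isClosed C hsucc hne
    (hclosed 0).isCompact hclosed

variable {p : ℕ}

namespace Kaloujnine

abbrev Tableau (p : ℕ) := (n : ℕ) → (Fin n → ZMod p) → ZMod p

def tableau (g : Perm (ℕ → ZMod p)) : Tableau p :=
  fun n v => g (extendWord n v) n - extendWord n v n

lemma extendWord_apply_fin {n : ℕ} (v : Fin n → ZMod p) (i : Fin n) :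
    extendWord n v i = v i :=
  dif_pos i.isLt

lemma eqOn_extendWord (x : ℕ → ZMod p) (n : ℕ) :
    EqOn (extendWord n fun i : Fin n => x i) x (Iio n) :=
  fun _ hk => dif_pos hk

end Kaloujnine

namespace IsTriangular

open Kaloujnine

variable {g : Perm (ℕ → ZMod p)}

lemma sub_eq_of_eqOn (hg : IsTriangular p g) {x y : ℕ → ZMod p} {n : ℕ}
    (h : EqOn x y (Iio n)) : g x n - x n = g y n - y n := by
  obtain ⟨a, ha⟩ := hg
  have : (fun i : Fin n => x i) = fun i : Fin n => y i := funext fun i => h i.isLt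
  rw [ha, ha, this]
  ring

lemma of_sub_eq_of_eqOn
    (h : ∀ (n : ℕ) (x y : ℕ → ZMod p), EqOn x y (Iio n) → g x n - x n = g y n - y n) :
    IsTriangular p g :=
  ⟨tableau g, fun x n => by
    rw [tableau, h n _ _ (eqOn_extendWord x n)]
    ring⟩

lemma apply_eq_tableau (hg : IsTriangular p g) (x : ℕ → ZMod p) (n : ℕ) :
    g x n = x n + tableau g n (fun i => x i) := by
  rw [tableau, hg.sub_eq_of_eqOn (eqOn_extendWord x n)]
  ring

lemma eqOn_apply (hg : IsTriangular p g) {x y : ℕ → ZMod p} {n : ℕ}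
    (h : EqOn x y (Iio n)) : EqOn (g x) (g y) (Iio n) := fun k hk => by
  have := hg.sub_eq_of_eqOn (h.mono (Iio_subset_Iio (le_of_lt hk)))
  rw [h hk] at this
  simpa using this

lemma eqOn_symm_apply (hg : IsTriangular p g) {x y : ℕ → ZMod p} {n : ℕ}
    (h : EqOn x y (Iio n)) : EqOn (g.symm x) (g.symm y) (Iio n) := by
  suffices ∀ m ≤ n, EqOn (g.symm x) (g.symm y) (Iio m) from this n le_rfl
  intro m
  induction m with
  | zero => simp
  | succ m ih =>
    intro hm k hk
    rcases Nat.lt_succ_iff_lt_or_eq.mp hk with hk | rfl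
    · exact ih (by omega) hk
    have := hg.sub_eq_of_eqOn (ih (by omega))
    rw [Equiv.apply_symm_apply, Equiv.apply_symm_apply, h (by simpa using hm)] at this
    simpa using this

lemma mul {h : Perm (ℕ → ZMod p)} (hg : IsTriangular p g) (hh : IsTriangular p h) :
    IsTriangular p (g * h) :=
  of_sub_eq_of_eqOn fun n x y hxy => by
    have hg' := hg.sub_eq_of_eqOn (hh.eqOn_apply hxy)
    have hh' := hh.sub_eq_of_eqOn hxy
    simp only [Perm.mul_apply]
    linear_combination hg' + hh'

lemma inv (hg : IsTriangular p g) : IsTriangular p g⁻¹ :=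
  of_sub_eq_of_eqOn fun n x y hxy => by
    have := hg.sub_eq_of_eqOn (hg.eqOn_symm_apply hxy)
    rw [Equiv.apply_symm_apply, Equiv.apply_symm_apply] at this
    simp only [Perm.inv_def]
    linear_combination -this

end IsTriangular

namespace Kaloujnine

def kaloujnine (p : ℕ) : Subgroup (Perm (ℕ → ZMod p)) where
  carrier := {g | IsTriangular p g}
  one_mem' := ⟨fun _ _ => 0, fun _ _ => by simp⟩
  mul_mem' hg hh := hg.mul hh
  inv_mem' hg := hg.inv

def tableauInv (a : Tableau p) (y : ℕ → ZMod p) : ℕ → ZMod p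
  | n => y n - a n fun i : Fin n => tableauInv a y i
termination_by n => n
decreasing_by exact i.isLt

lemma tableauInv_apply (a : Tableau p) (y : ℕ → ZMod p) (n : ℕ) :
    tableauInv a y n = y n - a n fun i : Fin n => tableauInv a y i := by
  rw [tableauInv]

def tableauPerm (a : Tableau p) : Perm (ℕ → ZMod p) where
  toFun x n := x n + a n fun i => x i
  invFun := tableauInv a
  left_inv x := by
    funext n
    induction n using Nat.strong_induction_on with
    | _ n ih =>
      have : (fun i : Fin n => tableauInv a (fun m => x m + a m fun j => x j) i) =
          fun i : Fin n => x i := funext fun i => ih i i.isLt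
      rw [tableauInv_apply, this]
      ring
  right_inv y := by
    funext n
    change tableauInv a y n + _ = y n
    rw [tableauInv_apply]
    ring

def ofTableau (a : Tableau p) : kaloujnine p :=
  ⟨tableauPerm a, a, fun _ _ => rfl⟩

lemma coe_ofTableau_apply (a : Tableau p) (x : ℕ → ZMod p) (n : ℕ) :
    (ofTableau a : Perm (ℕ → ZMod p)) x n = x n + a n fun i => x i :=
  rfl

lemma tableau_ofTableau (a : Tableau p) : tableau (ofTableau a : Perm (ℕ → ZMod p)) = a := by
  funext n v
  simp [tableau, coe_ofTableau_apply, extendWord_apply_fin]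

lemma ofTableau_tableau (g : kaloujnine p) : ofTableau (tableau (g : Perm (ℕ → ZMod p))) = g :=
  Subtype.ext <| Equiv.ext fun x => funext fun n => (g.2.apply_eq_tableau x n).symm

section

variable [NeZero p]

lemma _root_.IsTriangular.bijective_restrict_apply_extendWord {g : Perm (ℕ → ZMod p)}
    (hg : IsTriangular p g) (n : ℕ) :
    Function.Bijective fun (v : Fin n → ZMod p) (i : Fin n) => g (extendWord n v) i := by
  refine Finite.injective_iff_bijective.mp fun v w hvw => funext fun i => ?_
  have hagree : EqOn (g (extendWord n v)) (g (extendWord n w)) (Iio n) :=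
    fun k hk => congrFun hvw ⟨k, hk⟩
  have := hg.eqOn_symm_apply hagree i.isLt
  rwa [Equiv.symm_apply_apply, Equiv.symm_apply_apply, extendWord_apply_fin,
    extendWord_apply_fin] at this

lemma alphaKal_eq_sum_tableau (g : Perm (ℕ → ZMod p)) (n : ℕ) :
    alphaKal p g n = ∑ v, tableau g n v :=
  rfl

lemma alphaKal_mul {g h : Perm (ℕ → ZMod p)} (hg : IsTriangular p g) (hh : IsTriangular p h)
    (n : ℕ) : alphaKal p (g * h) n = alphaKal p g n + alphaKal p h n := by
  have htab : ∀ v, tableau (g * h) n v =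
      tableau g n (fun i : Fin n => h (extendWord n v) i) + tableau h n v := fun v => by
    simp only [tableau, Perm.mul_apply, hg.apply_eq_tableau (h (extendWord n v)) n]
    ring
  simp only [alphaKal_eq_sum_tableau, htab, Finset.sum_add_distrib,
    (hh.bijective_restrict_apply_extendWord n).sum_comp (tableau g n)]

noncomputable def alphaHom (p : ℕ) [NeZero p] :
    kaloujnine p →* Multiplicative (ℕ → ZMod p) where
  toFun g := .ofAdd (alphaKal p g)
  map_one' := by
    ext n
    simp [alphaKal]
  map_mul' g h := by
    ext n
    exact alphaKal_mul g.2 h.2 n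

lemma toAdd_alphaHom (g : kaloujnine p) : (alphaHom p g).toAdd = alphaKal p g :=
  rfl

lemma alphaHom_surjective : Function.Surjective (alphaHom p) := fun s => by
  refine ⟨ofTableau fun n v => if v = 0 then s.toAdd n else 0, ?_⟩
  ext n
  simp [toAdd_alphaHom, alphaKal_eq_sum_tableau, tableau_ofTableau]

lemma alphaKal_descProd (t : ℕ → kaloujnine p) (m k : ℕ) :
    alphaKal p ((descProd t m : kaloujnine p) : Perm (ℕ → ZMod p)) k =
      ∑ j ∈ Finset.range m, alphaKal p (t j : Perm (ℕ → ZMod p)) k := by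
  simpa [toAdd_alphaHom, toAdd_prod] using
    congrFun (congrArg Multiplicative.toAdd (map_descProd (alphaHom p) t m)) k

lemma _root_.IsTriangular.apply_zero_of_alphaKal_zero {g : Perm (ℕ → ZMod p)}
    (hg : IsTriangular p g) (h : alphaKal p g 0 = 0) (x : ℕ → ZMod p) : g x 0 = x 0 := by
  rw [hg.apply_eq_tableau, add_eq_left, ← h, alphaKal_eq_sum_tableau, Fintype.sum_unique]
  exact congrArg _ (Subsingleton.elim _ _)

end

def cons {α : Type*} (a : α) (t : ℕ → α) : ℕ → α
  | 0 => a
  | k + 1 => t k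

def tail {α : Type*} (x : ℕ → α) : ℕ → α := fun k => x (k + 1)

@[simp] lemma cons_zero {α : Type*} (a : α) (t : ℕ → α) : cons a t 0 = a := rfl

@[simp] lemma cons_succ {α : Type*} (a : α) (t : ℕ → α) (k : ℕ) : cons a t (k + 1) = t k :=
  rfl

@[simp] lemma tail_cons {α : Type*} (a : α) (t : ℕ → α) : tail (cons a t) = t := rfl

@[simp] lemma cons_self_tail {α : Type*} (x : ℕ → α) : cons (x 0) (tail x) = x :=
  funext fun k => by cases k <;> rfl

def basePerm (f : ZMod p → Perm (ℕ → ZMod p)) : Perm (ℕ → ZMod p) where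
  toFun x := cons (x 0) (f (x 0) (tail x))
  invFun x := cons (x 0) ((f (x 0)).symm (tail x))
  left_inv x := by simp
  right_inv x := by simp

lemma basePerm_apply (f : ZMod p → Perm (ℕ → ZMod p)) (x : ℕ → ZMod p) :
    basePerm f x = cons (x 0) (f (x 0) (tail x)) :=
  rfl

lemma isTriangular_basePerm {f : ZMod p → Perm (ℕ → ZMod p)}
    (hf : ∀ i, IsTriangular p (f i)) : IsTriangular p (basePerm f) := by
  refine ⟨fun n v => n.casesOn (fun _ => 0) (fun k v => tableau (f (v 0)) k (Fin.tail v)) v,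
    fun x n => ?_⟩
  cases n with
  | zero => simp [basePerm_apply]
  | succ k => exact (hf (x 0)).apply_eq_tableau (tail x) k

def baseHom (p : ℕ) : (ZMod p → kaloujnine p) →* kaloujnine p where
  toFun f := ⟨basePerm fun i => f i, isTriangular_basePerm fun i => (f i).2⟩
  map_one' := Subtype.ext <| Equiv.ext fun x => by simp [basePerm_apply]
  map_mul' f f' := Subtype.ext <| Equiv.ext fun x => by simp [basePerm_apply]

lemma coe_baseHom_apply (f : ZMod p → kaloujnine p) (x : ℕ → ZMod p) :
    (baseHom p f : Perm (ℕ → ZMod p)) x =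
      cons (x 0) ((f (x 0) : Perm (ℕ → ZMod p)) (tail x)) :=
  rfl

def shift (p : ℕ) : kaloujnine p :=
  ofTableau fun n _ => if n = 0 then 1 else 0

lemma shift_apply_zero (x : ℕ → ZMod p) : (shift p : Perm (ℕ → ZMod p)) x 0 = x 0 + 1 := by
  simp [shift, coe_ofTableau_apply]

lemma shift_apply_succ (x : ℕ → ZMod p) (k : ℕ) :
    (shift p : Perm (ℕ → ZMod p)) x (k + 1) = x (k + 1) := by
  simp [shift, coe_ofTableau_apply]

lemma tail_shift_apply (x : ℕ → ZMod p) : tail ((shift p : Perm (ℕ → ZMod p)) x) = tail x :=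
  funext (shift_apply_succ x)

lemma shift_mul_baseHom (f : ZMod p → kaloujnine p) :
    shift p * baseHom p f = baseHom p (fun i => f (i - 1)) * shift p := by
  refine Subtype.ext <| Equiv.ext fun x => funext fun k => ?_
  cases k <;> simp [coe_baseHom_apply, shift_apply_zero, shift_apply_succ, tail_shift_apply]

lemma commutatorElement_baseHom_shift (B : ZMod p → kaloujnine p) :
    ⁅baseHom p B, shift p⁆ = baseHom p fun i => B i * (B (i - 1))⁻¹ := by
  calc ⁅baseHom p B, shift p⁆
        = baseHom p B * (shift p * baseHom p B⁻¹) * (shift p)⁻¹ := by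
          rw [commutatorElement_def, map_inv]; group
    _ = baseHom p B * baseHom p (fun i => (B (i - 1))⁻¹) := by
          rw [shift_mul_baseHom, ← mul_assoc, mul_inv_cancel_right]
          rfl
    _ = baseHom p fun i => B i * (B (i - 1))⁻¹ := (map_mul _ _ _).symm

def sections (g : Perm (ℕ → ZMod p)) (i : ZMod p) : kaloujnine p :=
  ofTableau fun k w => tableau g (k + 1) (Fin.cons i w)

lemma baseHom_sections {g : kaloujnine p} (h0 : ∀ x, (g : Perm (ℕ → ZMod p)) x 0 = x 0) :
    baseHom p (sections g) = g := by
  refine Subtype.ext <| Equiv.ext fun x => funext fun k => ?_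
  cases k with
  | zero => exact (h0 x).symm
  | succ k =>
    rw [g.2.apply_eq_tableau x, coe_baseHom_apply, cons_succ]
    simp only [sections, coe_ofTableau_apply]
    congr 2
    exact funext (Fin.cases rfl fun _ => rfl)

def agreeBelow (p n : ℕ) : Con (kaloujnine p) where
  r g h := ∀ x, EqOn ((g : Perm (ℕ → ZMod p)) x) ((h : Perm (ℕ → ZMod p)) x) (Iio n)
  iseqv := ⟨fun _ _ _ _ => rfl, fun h x => (h x).symm, fun h h' x => (h x).trans (h' x)⟩
  mul' {g _ _ h'} hg hh x := (g.2.eqOn_apply (hh x)).trans (hg ((h' : Perm _) x))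

lemma agreeBelow.of_succ {n : ℕ} {g h : kaloujnine p} (hgh : agreeBelow p (n + 1) g h) :
    agreeBelow p n g h :=
  fun x => (hgh x).mono (Iio_subset_Iio n.le_succ)

lemma eq_of_forall_agreeBelow {g h : kaloujnine p} (hgh : ∀ n, agreeBelow p n g h) : g = h :=
  Subtype.ext <| Equiv.ext fun x => funext fun k => hgh (k + 1) x k.lt_succ_self

lemma agreeBelow_ofTableau {n : ℕ} {a a' : Tableau p} (h : ∀ k < n, a k = a' k) :
    agreeBelow p n (ofTableau a) (ofTableau a') := fun x k hk => by
  simp only [coe_ofTableau_apply, h k hk]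

lemma agreeBelow_succ_baseHom {n : ℕ} {f f' : ZMod p → kaloujnine p}
    (h : ∀ i, agreeBelow p n (f i) (f' i)) :
    agreeBelow p (n + 1) (baseHom p f) (baseHom p f') := fun x k hk => by
  cases k with
  | zero => rfl
  | succ k => exact h (x 0) (tail x) (Nat.succ_lt_succ_iff.mp hk)

variable [NeZero p]

lemma alphaKal_succ (g : Perm (ℕ → ZMod p)) (k : ℕ) :
    alphaKal p g (k + 1) = ∑ i, alphaKal p (sections g i) k := by
  simp only [alphaKal_eq_sum_tableau, sections, tableau_ofTableau]
  rw [← Fintype.sum_prod_type']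
  exact (Fintype.sum_equiv (Fin.consEquiv fun _ => ZMod p) _ _ fun _ => rfl).symm

theorem exists_commutator_mul_commutator_agreeBelow (hp : 1 < p) (n : ℕ) (g : kaloujnine p)
    (hα : ∀ k < n, alphaKal p g k = 0) :
    ∃ u v w z : kaloujnine p, agreeBelow p n (⁅u, v⁆ * ⁅w, z⁆) g := by
  induction n generalizing g with
  | zero => exact ⟨1, 1, 1, 1, fun _ _ hk => absurd hk (Nat.not_lt_zero _)⟩
  | succ n ih =>
    set s := sections (g : Perm (ℕ → ZMod p))
    have hg : baseHom p s = g :=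
      baseHom_sections (g.2.apply_zero_of_alphaKal_zero (hα 0 n.succ_pos))
    obtain ⟨u, v, w, z, huvwz⟩ := ih (descProd (fun j => s j) p) fun k hk => by
      rw [alphaKal_descProd, ZMod.sum_range_natCast p fun i => alphaKal p (s i) k,
        ← alphaKal_succ, hα (k + 1) (by omega)]
    obtain ⟨U, V, B, hUVB⟩ :=
      (agreeBelow p n).exists_commutator_mul_mul_inv_sub_one hp s ((agreeBelow p n).symm huvwz)
    refine ⟨baseHom p U, baseHom p V, baseHom p B, shift p, ?_⟩
    rw [commutatorElement_baseHom_shift, ← map_commutatorElement, ← map_mul, ← hg]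
    exact agreeBelow_succ_baseHom hUVB

theorem exists_commutator_mul_commutator_eq (hp : 1 < p) (g : kaloujnine p)
    (hα : ∀ n, alphaKal p g n = 0) :
    ∃ u v w z : kaloujnine p, ⁅u, v⁆ * ⁅w, z⁆ = g := by
  -- the approximations of different depths need not be compatible, hence the compactness
  let T (y : ∀ k, Fin 4 → (Fin k → ZMod p) → ZMod p) (j : Fin 4) : kaloujnine p :=
    ofTableau fun k => y k j
  let C (n : ℕ) := {y | agreeBelow p n (⁅T y 0, T y 1⁆ * ⁅T y 2, T y 3⁆) g}
  have hne (n : ℕ) : (C n).Nonempty := by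
    obtain ⟨u, v, w, z, h⟩ :=
      exists_commutator_mul_commutator_agreeBelow hp n g fun k _ => hα k
    refine ⟨fun k j => tableau (![u, v, w, z] j : Perm (ℕ → ZMod p)) k, ?_⟩
    simpa [C, T, ofTableau_tableau] using h
  have hcyl (n : ℕ) (y y' : ∀ k, Fin 4 → (Fin k → ZMod p) → ZMod p)
      (hyy' : ∀ k < n, y k = y' k) (hy : y ∈ C n) : y' ∈ C n := by
    have hT (j : Fin 4) : agreeBelow p n (T y' j) (T y j) :=
      agreeBelow_ofTableau fun k hk => congrFun (hyy' k hk).symm j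
    exact (agreeBelow p n).trans ((agreeBelow p n).mul
      ((agreeBelow p n).commutatorElement (hT 0) (hT 1))
      ((agreeBelow p n).commutatorElement (hT 2) (hT 3))) hy
  obtain ⟨y, hy⟩ :=
    nonempty_iInter_of_finite_cylinders C (fun _ _ hy => agreeBelow.of_succ hy) hne hcyl
  exact ⟨T y 0, T y 1, T y 2, T y 3, eq_of_forall_agreeBelow fun n => mem_iInter.mp hy n⟩

end Kaloujnine

/-- the triangular permutations of `(ZMod p)^ℕ` form a subgroup `K_p` of the
permutation group, and `α : g ↦ (α_0(g), α_1(g), …)` is a surjective group homomorphism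
from `K_p` onto the (additive, written multiplicatively) group of all sequences over
`ZMod p` whose kernel is the commutator subgroup of `K_p`; hence `α` is the abelianization
epimorphism `K_p → K_p/[K_p, K_p] ≅ (ZMod p)^ℕ`. -/
theorem alphaKal_abelianization (p : ℕ) (hp : p.Prime) [NeZero p] :
    ∃ H : Subgroup (Equiv.Perm (ℕ → ZMod p)),
      (H : Set (Equiv.Perm (ℕ → ZMod p))) = {g | IsTriangular p g} ∧
      ∃ α : H →* Multiplicative (ℕ → ZMod p),
        (∀ (g : H) (n : ℕ),
          Multiplicative.toAdd (α g) n = alphaKal p (g : Equiv.Perm (ℕ → ZMod p)) n) ∧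
        Function.Surjective α ∧
        α.ker = commutator H := by
  refine ⟨Kaloujnine.kaloujnine p, rfl, Kaloujnine.alphaHom p, fun _ _ => rfl,
    Kaloujnine.alphaHom_surjective, le_antisymm (fun g hg => ?_)
    (Abelianization.commutator_subset_ker _)⟩
  obtain ⟨u, v, w, z, rfl⟩ := Kaloujnine.exists_commutator_mul_commutator_eq hp.one_lt g
    fun n => congrFun (congrArg Multiplicative.toAdd (MonoidHom.mem_ker.mp hg)) n
  exact mul_mem (Subgroup.commutator_mem_commutator (Subgroup.mem_top u) (Subgroup.mem_top v))
    (Subgroup.commutator_mem_commutator (Subgroup.mem_top w) (Subgroup.mem_top z))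
end

section
/- Let p be a prime. For every 0 ≤ k ≤ p−1 and every x ∈ ZMod p, one has k! · b_k(x) = (−1)^k · (x+1)(x+2)⋯(x+k) in ZMod p; equivalently, b_k(x) = (−1)^k · binom(x+k, k), where the binomial coefficient is evaluated in ZMod p. In particular b_0 is the constant function 1 and b_{p−1} = δ_0. -/
/-- The indicator function `δ_0 : ZMod p → ZMod p` of `0`. -/
def delta0 (p : ℕ) : ZMod p → ZMod p := fun x => if x = 0 then 1 else 0

/-- The operator `S − 1` where `S` is the shift `(S f)(x) = f (x − 1)`. -/
def shiftDiff (p : ℕ) (f : ZMod p → ZMod p) : ZMod p → ZMod p :=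
  fun x => f (x - 1) - f x

/-- `b_k = (S − 1)^{p−1−k} (δ_0)` for `0 ≤ k ≤ p − 1`. -/
def bFun (p k : ℕ) : ZMod p → ZMod p :=
  (shiftDiff p)^[p - 1 - k] (delta0 p)

/-!
`(S − 1)` lowers the degree of `R_k(x) = (−1)^k (x+1)⋯(x+k)` by one, with
`(S − 1) R_{k+1} = (k+1) R_k`, so `k! b_k` and `R_k` satisfy the same downward recursion.
They agree at `k = p − 1`: `R_{p−1}` vanishes off `0` because its roots `−1, …, −(p−1)`
exhaust the nonzero residues, and `R_{p−1}(0) = (−1)^{p−1} (p−1)! = (p−1)!` by Fermat.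
-/

open Finset Nat

lemma prod_range_succ_sub_one_sub_prod {R : Type*} [CommRing R] (x : R) (k : ℕ) :
    ∏ t ∈ range (k + 1), (x - 1 + t + 1) - ∏ t ∈ range (k + 1), (x + t + 1) =
      -((k + 1) * ∏ t ∈ range k, (x + t + 1)) := by
  rw [prod_range_succ', prod_range_succ]
  have hshift :
      ∏ t ∈ range k, (x - 1 + ((t + 1 : ℕ) : R) + 1) = ∏ t ∈ range k, (x + t + 1) :=
    prod_congr rfl fun t _ => by push_cast; ring
  rw [hshift]
  push_cast
  ring

def signedRising (p k : ℕ) : ZMod p → ZMod p :=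
  fun x => (-1) ^ k * ∏ t ∈ range k, (x + t + 1)

lemma shiftDiff_smul (p : ℕ) (c : ZMod p) (f : ZMod p → ZMod p) :
    shiftDiff p (c • f) = c • shiftDiff p f := by
  funext x
  simp only [shiftDiff, Pi.smul_apply, smul_eq_mul, mul_sub]

lemma shiftDiff_signedRising_succ (p k : ℕ) :
    shiftDiff p (signedRising p (k + 1)) = ((k + 1 : ℕ) : ZMod p) • signedRising p k := by
  funext x
  have h := prod_range_succ_sub_one_sub_prod x k
  simp only [shiftDiff, signedRising, Pi.smul_apply, smul_eq_mul]
  push_cast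
  linear_combination (-1) ^ (k + 1) * h

lemma bFun_eq_shiftDiff_bFun_succ (p k : ℕ) (hk : k < p - 1) :
    bFun p k = shiftDiff p (bFun p (k + 1)) := by
  rw [bFun, bFun, show p - 1 - k = p - 1 - (k + 1) + 1 by omega, Function.iterate_succ_apply']

lemma bFun_sub_one (p : ℕ) : bFun p (p - 1) = delta0 p := by
  simp [bFun]

lemma factorial_smul_delta0 (p : ℕ) [Fact p.Prime] :
    ((p - 1)! : ZMod p) • delta0 p = signedRising p (p - 1) := by
  funext x
  simp only [delta0, signedRising, Pi.smul_apply, smul_eq_mul]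
  by_cases hx : x = 0
  · have hprod : ∏ t ∈ range (p - 1), ((0 : ZMod p) + t + 1) = ((p - 1)! : ZMod p) := by
      rw [← prod_range_add_one_eq_factorial, Nat.cast_prod]
      push_cast
      simp only [zero_add]
    rw [if_pos hx, hx, hprod, ZMod.pow_card_sub_one_eq_one (neg_ne_zero.mpr one_ne_zero)]
    ring
  · have hval : 1 ≤ (-x).val :=
      Nat.one_le_iff_ne_zero.mpr ((ZMod.val_ne_zero _).mpr (neg_ne_zero.mpr hx))
    have hmem : (-x).val - 1 ∈ range (p - 1) := by
      have := ZMod.val_lt (-x)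
      rw [mem_range]
      omega
    have hroot : x + (((-x).val - 1 : ℕ) : ZMod p) + 1 = 0 := by
      rw [Nat.cast_sub hval, ZMod.natCast_val, ZMod.cast_id]
      ring
    rw [if_neg hx, prod_eq_zero hmem hroot]
    ring

lemma factorial_smul_bFun (p : ℕ) [Fact p.Prime] {k : ℕ} (hk : k ≤ p - 1) :
    (k ! : ZMod p) • bFun p k = signedRising p k := by
  induction hk using Nat.decreasingInduction with
  | self => rw [bFun_sub_one, factorial_smul_delta0]
  | of_succ k hk ih =>
    have hunit : ((k + 1 : ℕ) : ZMod p) ≠ 0 := by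
      rw [Ne, ZMod.natCast_eq_zero_iff]
      intro hdvd
      have := Nat.le_of_dvd k.succ_pos hdvd
      omega
    apply smul_right_injective _ hunit
    calc ((k + 1 : ℕ) : ZMod p) • (k ! : ZMod p) • bFun p k
        = shiftDiff p (((k + 1)! : ZMod p) • bFun p (k + 1)) := by
          rw [shiftDiff_smul, ← bFun_eq_shiftDiff_bFun_succ p k hk, smul_smul,
            Nat.factorial_succ, Nat.cast_mul]
      _ = ((k + 1 : ℕ) : ZMod p) • signedRising p k := by
          rw [ih, shiftDiff_signedRising_succ]

/-- for a prime `p`, `0 ≤ k ≤ p−1` and `x ∈ ZMod p`,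
`k! · b_k(x) = (−1)^k (x+1)(x+2)⋯(x+k)`; equivalently
`b_k(x) = (−1)^k · binom(x+k, k)` evaluated in `ZMod p`. In particular `b_0 = 1`
and `b_{p−1} = δ_0`. -/
theorem bFun_formula (p : ℕ) (hp : p.Prime) (k : ℕ) (hk : k ≤ p - 1) (x : ZMod p) :
    ((Nat.factorial k : ZMod p) * bFun p k x =
        (-1) ^ k * ∏ t ∈ Finset.range k, (x + (t : ZMod p) + 1)) ∧
    (bFun p k x =
        (-1) ^ k * (∏ t ∈ Finset.range k, (x + (t : ZMod p) + 1)) *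
          (Nat.factorial k : ZMod p)⁻¹) ∧
    bFun p 0 = (fun _ : ZMod p => (1 : ZMod p)) ∧
    bFun p (p - 1) = delta0 p := by
  have := Fact.mk hp
  have hk_formula : (k ! : ZMod p) * bFun p k x = (-1) ^ k * ∏ t ∈ range k, (x + t + 1) :=
    congrFun (factorial_smul_bFun p hk) x
  have hfac : (k ! : ZMod p) ≠ 0 := by
    rw [Ne, ZMod.natCast_eq_zero_iff, hp.dvd_factorial]
    have := hp.two_le
    omega
  refine ⟨hk_formula, ?_, ?_, bFun_sub_one p⟩
  · rw [← hk_formula, mul_comm, inv_mul_cancel_left₀ hfac]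
  · funext y
    simpa [signedRising] using congrFun (factorial_smul_bFun p (Nat.zero_le (p - 1))) y
end

section
/- Let p be a prime. For all 0 ≤ i, j ≤ p−1 one has Σ_{k=0}^{p−1} binom(p−1−i, k) · binom(j, p−1−k) ≡ δ_{i,j} (mod p), where δ_{i,j} is 1 if i = j and 0 otherwise. Equivalently, the p × p matrices T = (binom(p−1−i, j))_{0 ≤ i,j ≤ p−1} and T' = (binom(j, p−1−i))_{0 ≤ i,j ≤ p−1} over ZMod p satisfy T · T' = 1; i.e., the inverse of T is obtained from T by transposition with respect to the secondary diagonal. -/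
open Finset

theorem Nat.sum_range_choose_mul_choose_sub (m n k : ℕ) :
    ∑ i ∈ range (k + 1), m.choose i * n.choose (k - i) = (m + n).choose k := by
  rw [Nat.add_choose_eq, Nat.sum_antidiagonal_eq_sum_range_succ_mk]

/-- For `i > j` the top is below `p - 1`; for `i < j` it lies in `[p, 2p - 2]`, and `p` divides
`binom(n, p - 1)` for such `n` since `p` divides `n!` but not `(p - 1)! (n - p + 1)!`. -/
theorem Nat.Prime.cast_choose_sub_add_eq_ite {p i j : ℕ} (hp : p.Prime) (hi : i ≤ p - 1)
    (hj : j ≤ p - 1) :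
    ((p - 1 - i + j).choose (p - 1) : ZMod p) = if i = j then 1 else 0 := by
  rcases lt_trichotomy i j with hij | rfl | hij
  · rw [if_neg hij.ne, ZMod.natCast_eq_zero_iff]
    exact hp.dvd_choose (by omega) (by omega) (by omega)
  · rw [if_pos rfl, Nat.sub_add_cancel hi, Nat.choose_self, Nat.cast_one]
  · rw [if_neg hij.ne', Nat.choose_eq_zero_of_lt (by omega), Nat.cast_zero]

theorem Nat.Prime.cast_sum_choose_mul_choose_eq_ite {p i j : ℕ} (hp : p.Prime) (hi : i ≤ p - 1)
    (hj : j ≤ p - 1) :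
    ((∑ k ∈ range p, (p - 1 - i).choose k * j.choose (p - 1 - k) : ℕ) : ZMod p) =
      if i = j then 1 else 0 := by
  have hvandermonde := Nat.sum_range_choose_mul_choose_sub (p - 1 - i) j (p - 1)
  rw [Nat.sub_add_cancel hp.one_le] at hvandermonde
  rw [hvandermonde, hp.cast_choose_sub_add_eq_ite hi hj]

/-- for a prime `p` and `0 ≤ i, j ≤ p−1`,
`Σ_{k=0}^{p−1} binom(p−1−i, k) · binom(j, p−1−k) ≡ δ_{i,j} (mod p)`; equivalently, the
`p × p` matrices `T = (binom(p−1−i, j))` and `T' = (binom(j, p−1−i))` over `ZMod p`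
satisfy `T · T' = 1`, i.e. the inverse of `T` is obtained from `T` by transposition with
respect to the secondary diagonal. -/
theorem binom_secondary_diagonal_inverse (p : ℕ) (hp : p.Prime) :
    (∀ i ≤ p - 1, ∀ j ≤ p - 1,
      ((∑ k ∈ Finset.range p,
          Nat.choose (p - 1 - i) k * Nat.choose j (p - 1 - k) : ℕ) : ZMod p) =
        if i = j then 1 else 0) ∧
    (Matrix.of fun i j : Fin p => ((Nat.choose (p - 1 - (i : ℕ)) (j : ℕ) : ℕ) : ZMod p)) *
        (Matrix.of fun i j : Fin p =>
          ((Nat.choose (j : ℕ) (p - 1 - (i : ℕ)) : ℕ) : ZMod p)) = 1 := by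
  refine ⟨fun i hi j hj => hp.cast_sum_choose_mul_choose_eq_ite hi hj, ?_⟩
  ext i j
  have hentry := hp.cast_sum_choose_mul_choose_eq_ite (i := i) (j := j) (by omega) (by omega)
  rw [Nat.cast_sum, ← Fin.sum_univ_eq_sum_range] at hentry
  simpa [Matrix.mul_apply, Matrix.one_apply, Fin.ext_iff] using hentry
end

section
/- Let p be a prime. For every g ∈ K_p and every n ≥ 1, the function x ↦ e_n(g⁻¹(x)) − e_n(x) belongs to U_{n−1}, and e_0 ∘ g⁻¹ = e_0. In other words, the natural representation of K_p on the span of the Kaloujnine monomials, given by g · f = f ∘ g⁻¹, is upper uni-triangular in the ordered basis (e_0, e_1, e_2, …). -/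
/-- The Kaloujnine monomial `e_n(x) = Π_i x_i^{k_i}`, where `k_0, k_1, …` are the base-`p`
digits of `n` (the digit `k_i = n / p^i % p` vanishes for `i > n`, so the product below
captures all of them). -/
def kalMonomial (p n : ℕ) : (ℕ → ZMod p) → ZMod p :=
  fun x => ∏ i ∈ Finset.range (n + 1), x i ^ (n / p ^ i % p)

/-- `U_n`: the `ZMod p`-linear span of the monomials `e_0, e_1, …, e_n`. -/
def Uspan (p n : ℕ) : Submodule (ZMod p) ((ℕ → ZMod p) → ZMod p) :=
  Submodule.span (ZMod p) (kalMonomial p '' {m : ℕ | m ≤ n})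

/-!
Write `n = l + k p^M` with `l < p^M` and `k < p`, so that `e_n(x) = e_l(x) x_M^k`. Since `g` is
triangular, `(g⁻¹x)_M = x_M + c(x)` where `c`, like `e_l ∘ g⁻¹`, depends only on
`x_0, …, x_{M-1}`. Every such function lies in `U_{p^M - 1}` (Lagrange interpolation over `𝔽_p`,
one coordinate at a time), and multiplying `U_{p^M - 1}` by `x_M^j` lands in `U_{p^M - 1 + j p^M}`
because the digits do not interact. Hence in
`e_n ∘ g⁻¹ - e_n = (e_l ∘ g⁻¹) ((x_M + c)^k - x_M^k) + (e_l ∘ g⁻¹ - e_l) x_M^k`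
the first summand lies in `U_{k p^M - 1}` by the binomial theorem, and the second in `U_{n-1}` by
induction on `M`.
-/

open Finset Polynomial

theorem FiniteField.exists_eq_sum_pow {K : Type*} [Field K] [Fintype K] (φ : K → K) :
    ∃ a : ℕ → K, ∀ t, φ t = ∑ j ∈ range (Fintype.card K), a j * t ^ j := by
  classical
  have hinj : Set.InjOn (id : K → K) (univ : Finset K) := Set.injOn_id _
  set P := Lagrange.interpolate univ id φ
  have hdeg : P.natDegree < Fintype.card K :=
    (natDegree_le_of_degree_le (Lagrange.degree_interpolate_le (r := φ) hinj)).trans_lt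
      (Nat.sub_lt Fintype.card_pos one_pos)
  refine ⟨P.coeff, fun t => ?_⟩
  rw [← eval_eq_sum_range' hdeg]
  exact (Lagrange.eval_interpolate_at_node (r := φ) hinj (mem_univ t)).symm

theorem kalMonomial_zero_apply (p : ℕ) (x : ℕ → ZMod p) : kalMonomial p 0 x = 1 := by
  simp [kalMonomial]

theorem kalMonomial_eq_prod_range {p n M : ℕ} (hp : 1 < p) (hn : n < p ^ M)
    (x : ℕ → ZMod p) : kalMonomial p n x = ∏ i ∈ range M, x i ^ (n / p ^ i % p) := by
  have shrink : ∀ {A B : ℕ}, n < p ^ A → A ≤ B →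
      ∏ i ∈ range B, x i ^ (n / p ^ i % p) = ∏ i ∈ range A, x i ^ (n / p ^ i % p) := by
    intro A B hA hAB
    refine (prod_subset (range_subset_range.2 hAB) fun i _ hiA => ?_).symm
    have hi : n < p ^ i := hA.trans_le (Nat.pow_le_pow_right (by omega) (by simpa using hiA))
    rw [Nat.div_eq_of_lt hi, Nat.zero_mod, pow_zero]
  have hn' : n < p ^ (n + 1) := (Nat.lt_pow_self hp).trans (Nat.pow_lt_pow_right hp (by omega))
  rw [kalMonomial, ← shrink hn' (le_max_left _ M), shrink hn (le_max_right _ M)]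

theorem add_mul_pow_lt_pow_succ {p l k M : ℕ} (hl : l < p ^ M) (hk : k < p) :
    l + k * p ^ M < p ^ (M + 1) :=
  calc l + k * p ^ M < (k + 1) * p ^ M := by linarith
    _ ≤ p ^ (M + 1) := by rw [pow_succ']; exact Nat.mul_le_mul_right _ hk

theorem kalMonomial_add_mul_pow {p l k M : ℕ} (hp : 1 < p) (hl : l < p ^ M) (hk : k < p)
    (x : ℕ → ZMod p) : kalMonomial p (l + k * p ^ M) x = kalMonomial p l x * x M ^ k := by
  rw [kalMonomial_eq_prod_range hp (add_mul_pow_lt_pow_succ hl hk),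
    kalMonomial_eq_prod_range hp hl, prod_range_succ]
  congr 1
  · refine prod_congr rfl fun i hi => ?_
    obtain ⟨d, rfl⟩ := Nat.exists_eq_add_of_lt (mem_range.1 hi)
    have : k * p ^ (i + d + 1) = p ^ i * (p * (k * p ^ d)) := by ring
    rw [this, Nat.add_mul_div_left _ _ (by positivity), Nat.add_mul_mod_self_left]
  · rw [Nat.add_mul_div_right _ _ (by positivity), Nat.div_eq_of_lt hl, zero_add,
      Nat.mod_eq_of_lt hk]

theorem kalMonomial_dependsOn {p n M : ℕ} (hp : 1 < p) (hn : n < p ^ M) :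
    DependsOn (kalMonomial p n) (Set.Iio M) := fun x y hxy => by
  simp only [kalMonomial_eq_prod_range hp hn]
  exact prod_congr rfl fun i hi => by rw [hxy i (by simpa using hi)]

/-- `span {e_m | m < n}`; unlike `Uspan p (n - 1)`, it is `⊥` (not `U_0`) for `n = 0`. -/
def UspanLT (p n : ℕ) : Submodule (ZMod p) ((ℕ → ZMod p) → ZMod p) :=
  Submodule.span (ZMod p) (kalMonomial p '' Set.Iio n)

theorem UspanLT_eq_Uspan {p n : ℕ} (hn : 1 ≤ n) : UspanLT p n = Uspan p (n - 1) := by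
  rw [UspanLT, Uspan]
  congr 2
  ext m
  simp only [Set.mem_Iio, Set.mem_ofPred_eq]
  omega

theorem UspanLT_mono {p a b : ℕ} (h : a ≤ b) : UspanLT p a ≤ UspanLT p b :=
  Submodule.span_mono (Set.image_mono (Set.Iio_subset_Iio h))

theorem kalMonomial_mem_UspanLT {p m n : ℕ} (h : m < n) : kalMonomial p m ∈ UspanLT p n :=
  Submodule.subset_span ⟨m, h, rfl⟩

theorem pow_add_mul_pow_le {p M j k : ℕ} (h : j < k) : p ^ M + j * p ^ M ≤ k * p ^ M := by
  rw [← one_add_mul, add_comm]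
  exact Nat.mul_le_mul_right _ h

theorem mul_pow_mem_UspanLT {p a k M : ℕ} (hp : 1 < p) (ha : a ≤ p ^ M) (hk : k < p)
    {f : (ℕ → ZMod p) → ZMod p} (hf : f ∈ UspanLT p a) :
    (fun x => f x * x M ^ k) ∈ UspanLT p (a + k * p ^ M) := by
  let mulPow := LinearMap.mulRight (ZMod p) fun x : ℕ → ZMod p => x M ^ k
  suffices UspanLT p a ≤ (UspanLT p (a + k * p ^ M)).comap mulPow from this hf
  refine Submodule.span_le.2 ?_
  rintro _ ⟨l, hl, rfl⟩
  have hl' : l < a := hl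
  have : mulPow (kalMonomial p l) = kalMonomial p (l + k * p ^ M) :=
    funext fun x => (kalMonomial_add_mul_pow hp (hl'.trans_le ha) hk x).symm
  simp only [SetLike.mem_coe, Submodule.mem_comap, this]
  exact kalMonomial_mem_UspanLT (by omega)

theorem mem_UspanLT_of_dependsOn {p : ℕ} [Fact p.Prime] {M : ℕ} {f : (ℕ → ZMod p) → ZMod p}
    (hf : DependsOn f (Set.Iio M)) : f ∈ UspanLT p (p ^ M) := by
  have hp := (Fact.out : p.Prime).one_lt
  induction M generalizing f with
  | zero =>
    have : f = f 0 • kalMonomial p 0 := funext fun x => by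
      simp [kalMonomial_zero_apply, hf (x := x) (y := 0) (by simp)]
    rw [this]
    exact Submodule.smul_mem _ _ (kalMonomial_mem_UspanLT (by simp))
  | succ M ih =>
    choose a ha using fun c : ZMod p => FiniteField.exists_eq_sum_pow fun t => if t = c then 1 else 0
    rw [ZMod.card] at ha
    have hsection : ∀ c, DependsOn (fun x => f (Function.update x M c)) (Set.Iio M) := by
      intro c x y hxy
      refine hf fun i hi => ?_
      rcases eq_or_ne i M with rfl | hne
      · simp
      · simp only [Function.update_of_ne hne]
        exact hxy i (by simp at hi ⊢; omega)
    -- `f` is the sum of its sections `x_M = c` times the indicators of `x_M = c`,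
    -- and each indicator is a polynomial of degree `< p` in `x_M`.
    have hdecomp : f = ∑ c : ZMod p, ∑ j ∈ range p,
        a c j • fun x => f (Function.update x M c) * x M ^ j := by
      funext x
      simp only [Finset.sum_apply, Pi.smul_apply, smul_eq_mul]
      calc f x = ∑ c : ZMod p, f (Function.update x M c) * if x M = c then 1 else 0 := by
            simp
        _ = _ := by
            simp only [ha, mul_sum]
            exact sum_congr rfl fun c _ => sum_congr rfl fun j _ => by ring
    rw [hdecomp]
    refine Submodule.sum_mem _ fun c _ => Submodule.sum_mem _ fun j hj => Submodule.smul_mem _ _ ?_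
    have hj : j < p := mem_range.1 hj
    refine UspanLT_mono ?_ (mul_pow_mem_UspanLT hp le_rfl hj (ih (hsection c)))
    rw [pow_succ']
    exact pow_add_mul_pow_le hj

namespace IsTriangular

variable {p : ℕ} {g : Equiv.Perm (ℕ → ZMod p)}

theorem dependsOn_apply_sub (hg : IsTriangular p g) (n : ℕ) :
    DependsOn (fun x => g x n - x n) (Set.Iio n) := fun x y hxy => by
  obtain ⟨a, ha⟩ := hg
  simp only [ha, add_sub_cancel_left]
  congr 1
  exact funext fun i => hxy i i.2

theorem symm_apply_eq_of_eqOn_Iio (hg : IsTriangular p g) {n : ℕ} {x y : ℕ → ZMod p}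
    (hxy : ∀ i ∈ Set.Iio n, x i = y i) : ∀ i ∈ Set.Iio n, g.symm x i = g.symm y i := by
  induction n with
  | zero => simp
  | succ n ih =>
    have ih' := ih fun i hi => hxy i (by simp at hi ⊢; omega)
    intro i hi
    rcases lt_or_eq_of_le (Nat.lt_succ_iff.1 hi) with hi | rfl
    · exact ih' i hi
    · have hx := hg.dependsOn_apply_sub i ih'
      simp only [Equiv.apply_symm_apply] at hx
      have := hxy i (by simp)
      linear_combination this - hx

theorem dependsOn_symm_apply_sub (hg : IsTriangular p g) (n : ℕ) :
    DependsOn (fun x => g.symm x n - x n) (Set.Iio n) := fun x y hxy => by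
  have := hg.dependsOn_apply_sub n (hg.symm_apply_eq_of_eqOn_Iio hxy)
  simp only [Equiv.apply_symm_apply] at this
  linear_combination -this

theorem dependsOn_comp_symm {M : ℕ} (hg : IsTriangular p g) {f : (ℕ → ZMod p) → ZMod p}
    (hf : DependsOn f (Set.Iio M)) : DependsOn (fun x => f (g.symm x)) (Set.Iio M) :=
  fun _ _ hxy => hf (hg.symm_apply_eq_of_eqOn_Iio hxy)

end IsTriangular

theorem mul_add_pow_sub_pow_mem_UspanLT {p : ℕ} [Fact p.Prime] {M k : ℕ}
    {H c : (ℕ → ZMod p) → ZMod p} (hH : DependsOn H (Set.Iio M))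
    (hc : DependsOn c (Set.Iio M)) (hk : k ≤ p) :
    (fun x => H x * ((x M + c x) ^ k - x M ^ k)) ∈ UspanLT p (k * p ^ M) := by
  have hexpand : (fun x => H x * ((x M + c x) ^ k - x M ^ k)) =
      ∑ j ∈ range k, fun x => H x * c x ^ (k - j) * (k.choose j : ZMod p) * x M ^ j := by
    funext x
    simp only [add_pow, sum_range_succ, Nat.sub_self, pow_zero, Nat.choose_self, Nat.cast_one,
      mul_one, add_sub_cancel_right, Finset.sum_apply, mul_sum]
    exact sum_congr rfl fun j _ => by ring
  rw [hexpand]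
  refine Submodule.sum_mem _ fun j hj => ?_
  have hjk : j < k := mem_range.1 hj
  have hcoeff : DependsOn (fun x => H x * c x ^ (k - j) * (k.choose j : ZMod p)) (Set.Iio M) :=
    fun x y hxy => by simp only [hH hxy, hc hxy]
  exact UspanLT_mono (pow_add_mul_pow_le hjk) <| mul_pow_mem_UspanLT
    (Fact.out : p.Prime).one_lt le_rfl (hjk.trans_le hk) (mem_UspanLT_of_dependsOn hcoeff)

theorem IsTriangular.kalMonomial_comp_symm_sub_mem {p : ℕ} [Fact p.Prime]
    {g : Equiv.Perm (ℕ → ZMod p)} (hg : IsTriangular p g) {M n : ℕ} (hn : n < p ^ M) :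
    (fun x => kalMonomial p n (g.symm x) - kalMonomial p n x) ∈ UspanLT p n := by
  have hp := (Fact.out : p.Prime).one_lt
  induction M generalizing n with
  | zero =>
    obtain rfl : n = 0 := by simpa using hn
    simp only [kalMonomial_zero_apply, sub_self]
    exact Submodule.zero_mem _
  | succ M ih =>
    have hpM : 0 < p ^ M := by positivity
    obtain ⟨l, k, hl, hk, rfl⟩ : ∃ l k, l < p ^ M ∧ k < p ∧ n = l + k * p ^ M :=
      ⟨n % p ^ M, n / p ^ M, Nat.mod_lt _ hpM,
        (Nat.div_lt_iff_lt_mul hpM).2 (by rwa [pow_succ'] at hn), (Nat.mod_add_div' n _).symm⟩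
    have hsplit : (fun x => kalMonomial p (l + k * p ^ M) (g.symm x) -
          kalMonomial p (l + k * p ^ M) x) =
        (fun x => kalMonomial p l (g.symm x) * ((x M + (g.symm x M - x M)) ^ k - x M ^ k)) +
          fun x => (kalMonomial p l (g.symm x) - kalMonomial p l x) * x M ^ k := by
      funext x
      simp only [Pi.add_apply, kalMonomial_add_mul_pow hp hl hk, add_sub_cancel]
      ring
    rw [hsplit]
    refine Submodule.add_mem _ ?_ (mul_pow_mem_UspanLT hp hl.le hk (ih hl))
    exact UspanLT_mono (Nat.le_add_left _ l) <| mul_add_pow_sub_pow_mem_UspanLT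
      (hg.dependsOn_comp_symm (kalMonomial_dependsOn hp hl)) (hg.dependsOn_symm_apply_sub M) hk.le

/-- for every `g ∈ K_p` and `n ≥ 1`, `e_n ∘ g⁻¹ − e_n ∈ U_{n−1}`, and
`e_0 ∘ g⁻¹ = e_0`; i.e. the natural representation `g · f = f ∘ g⁻¹` of `K_p` is upper
uni-triangular in the ordered basis `(e_0, e_1, e_2, …)`. -/
theorem kalMonomial_unitriangular (p : ℕ) (hp : p.Prime)
    (g : Equiv.Perm (ℕ → ZMod p)) (hg : IsTriangular p g) :
    (∀ n : ℕ, 1 ≤ n →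
      (fun x => kalMonomial p n (g.symm x) - kalMonomial p n x) ∈ Uspan p (n - 1)) ∧
    (fun x => kalMonomial p 0 (g.symm x)) = kalMonomial p 0 := by
  have : Fact p.Prime := ⟨hp⟩
  refine ⟨fun n hn => ?_, funext fun x => by simp only [kalMonomial_zero_apply]⟩
  rw [← UspanLT_eq_Uspan hn]
  exact hg.kalMonomial_comp_symm_sub_mem (Nat.lt_pow_self hp.one_lt)
end

section
/- Let p be a prime, g ∈ K_p, and n ≥ 1. Then the following are equivalent: (1) f ∘ g⁻¹ = f for every f ∈ U_{p^{n−1}}; (2) g acts trivially on the first n coordinates, i.e., (g x)_i = x_i for every x ∈ (ZMod p)^ℕ and every i < n. Consequently, restriction to U_{p^{n−1}} defines a faithful representation of the quotient of K_p by the pointwise stabilizer of the n-th level, by uni-triangular matrices of dimension p^{n−1} + 1. -/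
/-! The monomial `e_{p^i}` is the coordinate function `x ↦ x_i`, so invariance of `U_{p^{n-1}}`
forces `g` to fix the coordinates `x_0, …, x_{n-1}`. Conversely, for `m < p^n` every base-`p`
digit of `m` at a position `≥ n` vanishes, so `e_m` depends only on `x_0, …, x_{n-1}`, and
so does every element of `U_m`. -/

variable {p : ℕ}

theorem kalMonomial_pow_apply (hp : 1 < p) (i : ℕ) (x : ℕ → ZMod p) :
    kalMonomial p (p ^ i) x = x i := by
  have hdigit : p ^ i / p ^ i % p = 1 := by
    rw [Nat.div_self (by positivity), Nat.one_mod_eq_one.mpr hp.ne']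
  unfold kalMonomial
  have hi : i ∈ Finset.range (p ^ i + 1) :=
    Finset.mem_range.mpr (Nat.lt_succ_of_lt (Nat.lt_pow_self hp))
  rw [Finset.prod_eq_single_of_mem i hi, hdigit, pow_one]
  intro j _ hji
  rcases lt_or_gt_of_ne hji with hlt | hgt
  · rw [Nat.pow_div hlt.le (by omega),
      Nat.mod_eq_zero_of_dvd (dvd_pow_self p (by omega)), pow_zero]
  · rw [Nat.div_eq_of_lt (Nat.pow_lt_pow_right hp hgt), Nat.zero_mod, pow_zero]

theorem kalMonomial_congr (hp : 0 < p) {m n : ℕ} (hm : m < p ^ n) {x y : ℕ → ZMod p}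
    (hxy : ∀ i < n, x i = y i) : kalMonomial p m x = kalMonomial p m y := by
  refine Finset.prod_congr rfl fun j _ => ?_
  by_cases hjn : j < n
  · rw [hxy j hjn]
  · have hdigit : m / p ^ j = 0 :=
      Nat.div_eq_of_lt (hm.trans_le (Nat.pow_le_pow_right hp (by omega)))
    rw [hdigit, Nat.zero_mod, pow_zero, pow_zero]

theorem comp_eq_of_mem_Uspan (hp : 0 < p) {m n : ℕ} (hm : m < p ^ n)
    {σ : (ℕ → ZMod p) → ℕ → ZMod p} (hσ : ∀ x, ∀ i < n, σ x i = x i)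
    {f : (ℕ → ZMod p) → ZMod p} (hf : f ∈ Uspan p m) : (fun x => f (σ x)) = f := by
  refine LinearMap.eqOn_span (f := LinearMap.funLeft (ZMod p) (ZMod p) σ) (g := LinearMap.id)
    ?_ hf
  rintro _ ⟨k, hk, rfl⟩
  funext x
  exact kalMonomial_congr hp (lt_of_le_of_lt hk hm) (hσ x)

theorem faithful_on_Uspan_general (p : ℕ) (hp : p.Prime)
    (g : Equiv.Perm (ℕ → ZMod p)) (n : ℕ) (hn : 1 ≤ n) :
    (∀ f ∈ Uspan p (p ^ (n - 1)), (fun x => f (g.symm x)) = f) ↔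
      (∀ (x : ℕ → ZMod p) (i : ℕ), i < n → g x i = x i) := by
  constructor
  · intro h x i hi
    have hmem : kalMonomial p (p ^ i) ∈ Uspan p (p ^ (n - 1)) :=
      Submodule.subset_span ⟨p ^ i, Nat.pow_le_pow_right hp.pos (by omega), rfl⟩
    have hinv := congrFun (h _ hmem) (g x)
    rwa [Equiv.symm_apply_apply, kalMonomial_pow_apply hp.one_lt,
      kalMonomial_pow_apply hp.one_lt, eq_comm] at hinv
  · intro h f hf
    have hsymm : ∀ x, ∀ i < n, g.symm x i = x i := fun x i hi => by
      simpa using (h (g.symm x) i hi).symm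
    exact comp_eq_of_mem_Uspan hp.pos (Nat.pow_lt_pow_right hp.one_lt (Nat.sub_lt hn one_pos))
      hsymm hf

/-- for `g ∈ K_p` and `n ≥ 1`, `f ∘ g⁻¹ = f` for every `f ∈ U_{p^{n−1}}`
if and only if `g` acts trivially on the first `n` coordinates. Consequently, restriction
to `U_{p^{n−1}}` defines a faithful representation of the quotient of `K_p` by the
pointwise stabilizer of the `n`-th level, by uni-triangular matrices of dimension
`p^{n−1} + 1`. -/
theorem faithful_on_Uspan (p : ℕ) (hp : p.Prime)
    (g : Equiv.Perm (ℕ → ZMod p)) (hg : IsTriangular p g) (n : ℕ) (hn : 1 ≤ n) :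
    (∀ f ∈ Uspan p (p ^ (n - 1)), (fun x => f (g.symm x)) = f) ↔
      (∀ (x : ℕ → ZMod p) (i : ℕ), i < n → g x i = x i) :=
  faithful_on_Uspan_general p hp g n hn
end

section
/- Let p be a prime, g ∈ K_p, and n ≥ 1. Let k be the p-adic valuation of n (the largest k with p^k dividing n). Then the function f_n ∘ g⁻¹ − f_n − α_k(g) · f_{n−1} belongs to the ZMod p-linear span of {f_0, …, f_{n−2}} (interpreted as the zero subspace when n = 1). In other words, the entries s_1, s_2, … of the first diagonal above the main diagonal of the uni-triangular matrix of g in the ordered basis (f_0, f_1, f_2, …) are given by s_n = α_{v_p(n)}(g). -/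
/-- `f_n(x) = Π_i b_{k_i}(x_i)`, where `k_0, k_1, …` are the base-`p` digits of `n`
(digits with `i > n` vanish and contribute the factor `b_0 = 1`... the finitely many
possibly nontrivial factors are captured by the range below). -/
def fBasis (p n : ℕ) : (ℕ → ZMod p) → ZMod p :=
  fun x => ∏ i ∈ Finset.range (n + 1), bFun p (n / p ^ i % p) (x i)

open Polynomial

theorem Module.End.pow_apply_sub_sub_nsmul_mem {R M : Type*} [Semiring R] [AddCommGroup M]
    [Module R M] (S : Module.End R M) {W : Submodule R M} (hW : ∀ w ∈ W, (S - 1) w ∈ W)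
    {f : M} (hf : (S - 1) ((S - 1) f) ∈ W) (m : ℕ) :
    (S ^ m) f - f - m • (S - 1) f ∈ W := by
  induction m with
  | zero => simp
  | succ m ih =>
    have hstep : (S ^ (m + 1)) f - f - (m + 1) • (S - 1) f =
        ((S ^ m) f - f - m • (S - 1) f) + (S - 1) ((S ^ m) f - f - m • (S - 1) f)
          + m • (S - 1) ((S - 1) f) := by
      simp only [pow_succ', Module.End.mul_apply, map_sub, map_nsmul, LinearMap.sub_apply,
        Module.End.one_apply, add_nsmul, one_nsmul]
      abel
    rw [hstep]
    exact add_mem (add_mem ih (hW _ ih)) (W.nsmul_mem hf m)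

section OneVariable

variable {p : ℕ}

def shift (p : ℕ) : Module.End (ZMod p) (ZMod p → ZMod p) :=
  LinearMap.funLeft (ZMod p) (ZMod p) (· - 1)

theorem shift_pow_apply (m : ℕ) (f : ZMod p → ZMod p) (x : ZMod p) :
    (shift p ^ m) f x = f (x - m) := by
  induction m generalizing x with
  | zero => simp
  | succ m ih =>
    rw [pow_succ', Module.End.mul_apply]
    change (shift p ^ m) f (x - 1) = _
    rw [ih]
    push_cast
    ring_nf

theorem coe_shift_sub_one : ⇑(shift p - 1) = shiftDiff p := rfl

theorem bFun_eq_pow_apply (k : ℕ) : bFun p k = ((shift p - 1) ^ (p - 1 - k)) (delta0 p) := by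
  rw [Module.End.pow_apply, coe_shift_sub_one, bFun]

theorem shift_sub_one_bFun {k : ℕ} (hk : 0 < k) (hkp : k < p) :
    (shift p - 1) (bFun p k) = bFun p (k - 1) := by
  rw [bFun_eq_pow_apply, bFun_eq_pow_apply, ← Module.End.mul_apply, ← pow_succ']
  congr 3
  omega

theorem bFun_sub_one_eq_delta0 : bFun p (p - 1) = delta0 p := by
  simp [bFun]

theorem X_sub_one_pow_pred (hp : p.Prime) :
    ((X - 1 : (ZMod p)[X])) ^ (p - 1) = ∑ i ∈ Finset.range p, X ^ i := by
  have := Fact.mk hp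
  refine mul_right_cancel₀ (X_sub_C_ne_zero (1 : ZMod p)) ?_
  rw [C_1, ← pow_succ, Nat.sub_add_cancel hp.one_lt.le, sub_pow_char, one_pow, geom_sum_mul]

theorem bFun_zero (hp : p.Prime) : bFun p 0 = 1 := by
  have hS : (shift p - 1) ^ (p - 1) = ∑ i ∈ Finset.range p, shift p ^ i := by
    simpa using congrArg (aeval (shift p)) (X_sub_one_pow_pred hp)
  have : NeZero p := ⟨hp.ne_zero⟩
  funext x
  rw [bFun_eq_pow_apply, Nat.sub_zero, hS, LinearMap.sum_apply, Finset.sum_apply]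
  simp only [shift_pow_apply, delta0, sub_eq_zero, Pi.one_apply]
  have hx : ∀ i ∈ Finset.range p, (x = i ↔ x.val = i) := fun i hi => by
    constructor
    · rintro rfl
      exact ZMod.val_cast_of_lt (Finset.mem_range.mp hi)
    · rintro h
      rw [← h, ZMod.natCast_zmod_val]
  rw [Finset.sum_congr rfl fun i hi => if_congr (hx i hi) rfl rfl,
    Finset.sum_ite_eq (Finset.range p), if_pos (Finset.mem_range.mpr x.val_lt)]

theorem shift_sub_one_bFun_zero (hp : p.Prime) : (shift p - 1) (bFun p 0) = 0 := by
  rw [bFun_zero hp, coe_shift_sub_one]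
  funext x
  simp [shiftDiff]

def bFunSpan (p K : ℕ) : Submodule (ZMod p) (ZMod p → ZMod p) :=
  Submodule.span (ZMod p) (bFun p '' Set.Iio K)

theorem bFunSpan_mono {K K' : ℕ} (h : K ≤ K') : bFunSpan p K ≤ bFunSpan p K' :=
  Submodule.span_mono (Set.image_mono (Set.Iio_subset_Iio h))

theorem bFun_mem_bFunSpan {k K : ℕ} (h : k < K) : bFun p k ∈ bFunSpan p K :=
  Submodule.subset_span ⟨k, h, rfl⟩

theorem shift_sub_one_mem_bFunSpan (hp : p.Prime) {K : ℕ} (hK : K < p) {f : ZMod p → ZMod p}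
    (hf : f ∈ bFunSpan p (K + 1)) : (shift p - 1) f ∈ bFunSpan p K := by
  refine (Submodule.map_span_le _ _ _).2 ?_ (Submodule.mem_map_of_mem hf)
  rintro _ ⟨k, hk, rfl⟩
  rcases Nat.eq_zero_or_pos k with rfl | hk0
  · rw [shift_sub_one_bFun_zero hp]
    exact zero_mem _
  · rw [shift_sub_one_bFun hk0 (by have := Set.mem_Iio.1 hk; omega)]
    exact bFun_mem_bFunSpan (by have := Set.mem_Iio.1 hk; omega)

-- The span is stable under `S = 1 + (S - 1)` and contains `δ₀ = b_{p-1}`, hence every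
-- indicator `Sʸ δ₀`.
theorem bFunSpan_eq_top (hp : p.Prime) : bFunSpan p p = ⊤ := by
  have : NeZero p := ⟨hp.ne_zero⟩
  have hshift : ∀ f ∈ bFunSpan p p, shift p f ∈ bFunSpan p p := fun f hf => by
    have hΔ := shift_sub_one_mem_bFunSpan hp (Nat.sub_lt hp.pos one_pos)
      (by rwa [Nat.sub_add_cancel hp.one_lt.le])
    simpa using add_mem hf (bFunSpan_mono (Nat.sub_le p 1) hΔ)
  have hpow : ∀ m : ℕ, (shift p ^ m) (delta0 p) ∈ bFunSpan p p := fun m => by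
    induction m with
    | zero => simpa [← bFun_sub_one_eq_delta0] using bFun_mem_bFunSpan (Nat.sub_lt hp.pos one_pos)
    | succ m ih => rw [pow_succ', Module.End.mul_apply]; exact hshift _ ih
  refine Submodule.eq_top_iff'.2 fun φ => ?_
  rw [pi_eq_sum_univ φ]
  refine Submodule.sum_mem _ fun y _ => Submodule.smul_mem _ _ ?_
  convert hpow y.val using 1
  funext x
  simp [shift_pow_apply, delta0, sub_eq_zero, eq_comm]

theorem sum_shift_sub_one_apply [NeZero p] (f : ZMod p → ZMod p) :
    ∑ x, (shift p - 1) f x = 0 := by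
  rw [coe_shift_sub_one]
  simp only [shiftDiff, Finset.sum_sub_distrib, sub_eq_zero]
  exact Fintype.sum_equiv (Equiv.subRight 1) _ _ fun _ => rfl

theorem sub_sum_smul_delta0_mem [NeZero p] (hp : p.Prime) (φ : ZMod p → ZMod p) :
    φ - (∑ x, φ x) • delta0 p ∈ bFunSpan p (p - 1) := by
  have hsum : ∀ z ∈ bFunSpan p (p - 1), ∑ x, z x = 0 := by
    suffices bFunSpan p (p - 1) ≤ LinearMap.range (shift p - 1) by
      rintro z hz
      obtain ⟨w, rfl⟩ := this hz
      exact sum_shift_sub_one_apply w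
    refine Submodule.span_le.2 ?_
    rintro _ ⟨k, hk, rfl⟩
    exact ⟨bFun p (k + 1), shift_sub_one_bFun k.succ_pos (by have := Set.mem_Iio.1 hk; omega)⟩
  have hφ : φ ∈ Submodule.span (ZMod p) (insert (delta0 p) (bFun p '' Set.Iio (p - 1))) := by
    refine Submodule.span_mono ?_ (bFunSpan_eq_top hp ▸ Submodule.mem_top)
    rintro _ ⟨k, hk, rfl⟩
    by_cases hkp : k = p - 1
    · exact Or.inl (hkp ▸ bFun_sub_one_eq_delta0)
    · exact Or.inr ⟨k, show k < p - 1 by have := Set.mem_Iio.1 hk; omega, rfl⟩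
  obtain ⟨a, z, hz, rfl⟩ := Submodule.mem_span_insert.1 hφ
  have ha : ∑ x, (a • delta0 p + z) x = a := by
    simp [Finset.sum_add_distrib, hsum z hz, delta0]
  rw [ha, add_sub_cancel_left]
  exact hz

theorem bFun_comp_sub_sub_mem [NeZero p] (hp : p.Prime) {k : ℕ} (hk0 : 0 < k) (hkp : k < p)
    (c : ZMod p) :
    (fun x => bFun p k (x - c)) - bFun p k - c • bFun p (k - 1) ∈ bFunSpan p (k - 1) := by
  have hW : ∀ w ∈ bFunSpan p (k - 1), (shift p - 1) w ∈ bFunSpan p (k - 1) := fun w hw =>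
    shift_sub_one_mem_bFunSpan hp (by omega) (bFunSpan_mono (Nat.le_succ _) hw)
  have hf : (shift p - 1) ((shift p - 1) (bFun p k)) ∈ bFunSpan p (k - 1) := by
    rw [shift_sub_one_bFun hk0 hkp]
    exact shift_sub_one_mem_bFunSpan hp (by omega) (bFun_mem_bFunSpan (by omega))
  have hS : (shift p ^ c.val) (bFun p k) = fun x => bFun p k (x - c) := by
    funext x
    rw [shift_pow_apply, ZMod.natCast_zmod_val]
  have hc : c • bFun p (k - 1) = c.val • (shift p - 1) (bFun p k) := by
    rw [shift_sub_one_bFun hk0 hkp, ← Nat.cast_smul_eq_nsmul (ZMod p), ZMod.natCast_zmod_val]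
  simpa only [hS, hc] using (shift p).pow_apply_sub_sub_nsmul_mem hW hf c.val

end OneVariable

section Sequences

variable {α : Type*}

def seqTail (x : ℕ → α) : ℕ → α := fun i => x (i + 1)

def seqCons (y : α) (z : ℕ → α) : ℕ → α := fun n => Nat.casesOn n y z

@[simp] theorem seqCons_zero (y : α) (z : ℕ → α) : seqCons y z 0 = y := rfl

@[simp] theorem seqTail_seqCons (y : α) (z : ℕ → α) : seqTail (seqCons y z) = z := rfl

@[simp] theorem seqCons_zero_seqTail (x : ℕ → α) : seqCons (x 0) (seqTail x) = x := by
  funext n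
  cases n <;> rfl

theorem seqCons_seqTail_of_eq {x : ℕ → α} {y : α} (h : x 0 = y) : seqCons y (seqTail x) = x :=
  h ▸ seqCons_zero_seqTail x

end Sequences

section Basis

variable {p : ℕ}

theorem fBasis_eq_prod_range (hp : p.Prime) {n N : ℕ} (hN : n < N) (x : ℕ → ZMod p) :
    fBasis p n x = ∏ i ∈ Finset.range N, bFun p (n / p ^ i % p) (x i) := by
  refine Finset.prod_subset (Finset.range_subset_range.2 hN) fun i _ hi => ?_
  have hni : n < p ^ i := by
    rw [Finset.mem_range, not_lt] at hi
    exact (Nat.lt_pow_self hp.one_lt).trans_le (Nat.pow_le_pow_right hp.pos (by omega))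
  rw [Nat.div_eq_of_lt hni, Nat.zero_mod, bFun_zero hp, Pi.one_apply]

theorem fBasis_zero (hp : p.Prime) : fBasis p 0 = 1 := by
  funext x
  simp [fBasis, bFun_zero hp]

theorem fBasis_mul_add (hp : p.Prime) {j : ℕ} (hj : j < p) (m : ℕ) (x : ℕ → ZMod p) :
    fBasis p (p * m + j) x = bFun p j (x 0) * fBasis p m (seqTail x) := by
  have hdigit : ∀ i, (p * m + j) / p ^ (i + 1) = m / p ^ i := fun i => by
    rw [pow_succ', ← Nat.div_div_eq_div_mul, Nat.mul_add_div hp.pos, Nat.div_eq_of_lt hj,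
      add_zero]
  rw [fBasis_eq_prod_range hp (N := p * m + j + 2) (by omega), Finset.prod_range_succ',
    fBasis_eq_prod_range hp (N := p * m + j + 1) (by nlinarith [hp.one_lt]), mul_comm]
  simp only [hdigit, pow_zero, Nat.div_one, Nat.mul_add_mod_self_left, Nat.mod_eq_of_lt hj]
  rfl

theorem fBasis_mul (hp : p.Prime) (m : ℕ) (x : ℕ → ZMod p) :
    fBasis p (p * m) x = fBasis p m (seqTail x) := by
  simpa [bFun_zero hp] using fBasis_mul_add hp hp.pos m x

def fBasisSpan (p N : ℕ) : Submodule (ZMod p) ((ℕ → ZMod p) → ZMod p) :=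
  Submodule.span (ZMod p) (fBasis p '' Set.Iio N)

theorem fBasisSpan_mono {N N' : ℕ} (h : N ≤ N') : fBasisSpan p N ≤ fBasisSpan p N' :=
  Submodule.span_mono (Set.image_mono (Set.Iio_subset_Iio h))

theorem fBasis_mem_fBasisSpan {n N : ℕ} (h : n < N) : fBasis p n ∈ fBasisSpan p N :=
  Submodule.subset_span ⟨n, h, rfl⟩

theorem mul_fBasis_seqTail_mem_fBasisSpan (hp : p.Prime) {K : ℕ} (hK : K ≤ p)
    {φ : ZMod p → ZMod p} (hφ : φ ∈ bFunSpan p K) (m : ℕ) :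
    (fun x => φ (x 0) * fBasis p m (seqTail x)) ∈ fBasisSpan p (p * m + K) := by
  let L := LinearMap.mulRight (ZMod p) (fBasis p m ∘ seqTail) ∘ₗ
    LinearMap.funLeft (ZMod p) (ZMod p) (fun x : ℕ → ZMod p => x 0)
  refine (Submodule.map_span_le L _ _).2 ?_ (Submodule.mem_map_of_mem hφ)
  rintro _ ⟨j, hj, rfl⟩
  have hL : L (bFun p j) = fBasis p (p * m + j) := by
    funext x
    exact (fBasis_mul_add hp (lt_of_lt_of_le hj hK) m x).symm
  rw [hL]
  exact fBasis_mem_fBasisSpan (by have := Set.mem_Iio.1 hj; omega)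

theorem fiberwise_mem_fBasisSpan [NeZero p] (hp : p.Prime) {M : ℕ}
    {G : ZMod p → (ℕ → ZMod p) → ZMod p} (hG : ∀ y, G y ∈ fBasisSpan p M) :
    (fun x => G (x 0) (seqTail x)) ∈ fBasisSpan p (p * M) := by
  have hsum : (fun x => G (x 0) (seqTail x)) =
      ∑ y, (fun x => (if x 0 = y then 1 else 0) * G y (seqTail x)) := by
    funext x
    simp [Finset.sum_apply]
  rw [hsum]
  refine Submodule.sum_mem _ fun y _ => ?_
  let δy : (ℕ → ZMod p) → ZMod p := fun x => if x 0 = y then 1 else 0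
  let L := LinearMap.mulLeft (ZMod p) δy ∘ₗ
    LinearMap.funLeft (ZMod p) (ZMod p) (seqTail (α := ZMod p))
  refine (Submodule.map_span_le L _ _).2 ?_ (Submodule.mem_map_of_mem (hG y))
  rintro _ ⟨l, hl, rfl⟩
  refine fBasisSpan_mono ?_ (mul_fBasis_seqTail_mem_fBasisSpan hp le_rfl
    (bFunSpan_eq_top hp ▸ Submodule.mem_top (x := fun u => if u = y then 1 else 0)) l)
  have hlM : l + 1 ≤ M := Set.mem_Iio.1 hl
  nlinarith

end Basis

section Triangular

variable {p : ℕ} {g : Equiv.Perm (ℕ → ZMod p)}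

theorem IsTriangular.apply_zero (hg : IsTriangular p g) (x : ℕ → ZMod p) :
    g x 0 = x 0 + g 0 0 := by
  obtain ⟨a, ha⟩ := hg
  rw [ha, ha 0 0, Subsingleton.elim (fun i : Fin 0 => x i) fun i => (0 : ℕ → ZMod p) i]
  simp

theorem IsTriangular.symm_apply_zero (hg : IsTriangular p g) (x : ℕ → ZMod p) :
    g.symm x 0 = x 0 - g 0 0 := by
  rw [eq_sub_iff_add_eq, ← hg.apply_zero, Equiv.apply_symm_apply]

def IsTriangular.tailPerm (hg : IsTriangular p g) (y : ZMod p) : Equiv.Perm (ℕ → ZMod p) where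
  toFun z := seqTail (g (seqCons y z))
  invFun z := seqTail (g.symm (seqCons (y + g 0 0) z))
  left_inv z := by
    change seqTail (g.symm (seqCons (y + g 0 0) (seqTail (g (seqCons y z))))) = z
    rw [seqCons_seqTail_of_eq (by rw [hg.apply_zero, seqCons_zero]), Equiv.symm_apply_apply,
      seqTail_seqCons]
  right_inv z := by
    change seqTail (g (seqCons y (seqTail (g.symm (seqCons (y + g 0 0) z))))) = z
    rw [seqCons_seqTail_of_eq (by rw [hg.symm_apply_zero, seqCons_zero, add_sub_cancel_right]),
      Equiv.apply_symm_apply, seqTail_seqCons]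

theorem IsTriangular.tailPerm_isTriangular (hg : IsTriangular p g) (y : ZMod p) :
    IsTriangular p (hg.tailPerm y) := by
  obtain ⟨a, ha⟩ := id hg
  refine ⟨fun n v => a (n + 1) (Fin.cons y v), fun z n => ?_⟩
  change g (seqCons y z) (n + 1) = _
  rw [ha]
  congr 2
  funext i
  refine Fin.cases rfl (fun j => ?_) i
  simp only [Fin.cons_succ, Fin.val_succ]
  rfl

theorem IsTriangular.seqTail_symm_apply (hg : IsTriangular p g) (x : ℕ → ZMod p) :
    seqTail (g.symm x) = (hg.tailPerm (x 0 - g 0 0)).symm (seqTail x) := by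
  change _ = seqTail (g.symm (seqCons (x 0 - g 0 0 + g 0 0) (seqTail x)))
  rw [sub_add_cancel, seqCons_zero_seqTail]

theorem IsTriangular.fBasis_mul_add_symm_apply (hg : IsTriangular p g) (hp : p.Prime) {r : ℕ}
    (hr : r < p) (m : ℕ) (x : ℕ → ZMod p) :
    fBasis p (p * m + r) (g.symm x) =
      bFun p r (x 0 - g 0 0) * fBasis p m ((hg.tailPerm (x 0 - g 0 0)).symm (seqTail x)) := by
  rw [fBasis_mul_add hp hr, hg.symm_apply_zero, hg.seqTail_symm_apply]

theorem extendWord_succ_cons (n : ℕ) (y : ZMod p) (w : Fin n → ZMod p) :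
    extendWord (n + 1) (Fin.cons y w) = seqCons y (extendWord n w) := by
  funext i
  rcases i with _ | i
  · rfl
  · by_cases h : i < n
    · simp only [extendWord, seqCons, dif_pos h, dif_pos (Nat.succ_lt_succ h)]
      exact Fin.cons_succ (α := fun _ => ZMod p) y w ⟨i, h⟩
    · simp [extendWord, seqCons, h]

variable [NeZero p]

theorem IsTriangular.alphaKal_zero (hg : IsTriangular p g) : alphaKal p g 0 = g 0 0 := by
  rw [alphaKal, Finset.sum_congr rfl fun v _ => by rw [hg.apply_zero, add_sub_cancel_left]]
  simp

theorem IsTriangular.alphaKal_succ (hg : IsTriangular p g) (n : ℕ) :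
    alphaKal p g (n + 1) = ∑ y, alphaKal p (hg.tailPerm y) n := by
  rw [alphaKal, ← (Fin.consEquiv fun _ => ZMod p).sum_comp, Fintype.sum_prod_type]
  refine Finset.sum_congr rfl fun y _ => Finset.sum_congr rfl fun w _ => ?_
  rw [show (Fin.consEquiv fun _ => ZMod p) (y, w) = Fin.cons y w from rfl, extendWord_succ_cons]
  rfl

end Triangular

section Superdiagonal

variable {p : ℕ} [NeZero p]

theorem fBasis_comp_symm_sub_mem_of_not_dvd (hp : p.Prime) {m r : ℕ} (hr0 : 0 < r) (hrp : r < p)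
    (hm : ∀ g : Equiv.Perm (ℕ → ZMod p), IsTriangular p g →
      fBasis p m ∘ g.symm - fBasis p m ∈ fBasisSpan p m)
    {g : Equiv.Perm (ℕ → ZMod p)} (hg : IsTriangular p g) :
    fBasis p (p * m + r) ∘ g.symm - fBasis p (p * m + r) -
        g 0 0 • fBasis p (p * m + (r - 1)) ∈ fBasisSpan p (p * m + (r - 1)) := by
  set c := g 0 0
  let G : ZMod p → (ℕ → ZMod p) → ZMod p := fun y =>
    bFun p r (y - c) • (fBasis p m ∘ (hg.tailPerm (y - c)).symm - fBasis p m)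
  let φ : ZMod p → ZMod p := (fun y => bFun p r (y - c)) - bFun p r - c • bFun p (r - 1)
  have hsplit : fBasis p (p * m + r) ∘ g.symm - fBasis p (p * m + r) -
      c • fBasis p (p * m + (r - 1)) =
        (fun x => G (x 0) (seqTail x)) + (fun x => φ (x 0) * fBasis p m (seqTail x)) := by
    funext x
    simp only [G, φ, Function.comp_apply, Pi.add_apply, Pi.sub_apply, Pi.smul_apply, smul_eq_mul,
      hg.fBasis_mul_add_symm_apply hp hrp, fBasis_mul_add hp hrp,
      fBasis_mul_add hp (show r - 1 < p by omega)]
    ring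
  rw [hsplit]
  refine add_mem (fBasisSpan_mono (Nat.le_add_right _ _) (fiberwise_mem_fBasisSpan hp fun y => ?_))
    (mul_fBasis_seqTail_mem_fBasisSpan hp (by omega) (bFun_comp_sub_sub_mem hp hr0 hrp c) m)
  exact Submodule.smul_mem _ _ (hm _ (hg.tailPerm_isTriangular _))

theorem fBasis_comp_symm_sub_mem_of_dvd (hp : p.Prime) {m : ℕ}
    (hm : ∀ g : Equiv.Perm (ℕ → ZMod p), IsTriangular p g →
      fBasis p m ∘ g.symm - fBasis p m - alphaKal p g (padicValNat p m) • fBasis p (m - 1) ∈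
        fBasisSpan p (m - 1))
    {g : Equiv.Perm (ℕ → ZMod p)} (hg : IsTriangular p g) :
    fBasis p (p * m) ∘ g.symm - fBasis p (p * m) -
        alphaKal p g (padicValNat p m + 1) • fBasis p (p * (m - 1) + (p - 1)) ∈
      fBasisSpan p (p * (m - 1) + (p - 1)) := by
  set c := g 0 0
  let φ : ZMod p → ZMod p := fun y => alphaKal p (hg.tailPerm (y - c)) (padicValNat p m)
  let G : ZMod p → (ℕ → ZMod p) → ZMod p := fun y =>
    fBasis p m ∘ (hg.tailPerm (y - c)).symm - fBasis p m - φ y • fBasis p (m - 1)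
  have hα : alphaKal p g (padicValNat p m + 1) = ∑ y, φ y := by
    rw [hg.alphaKal_succ]
    exact (Fintype.sum_equiv (Equiv.subRight c) _ _ fun _ => rfl).symm
  have hsplit : fBasis p (p * m) ∘ g.symm - fBasis p (p * m) -
      alphaKal p g (padicValNat p m + 1) • fBasis p (p * (m - 1) + (p - 1)) =
        (fun x => G (x 0) (seqTail x)) +
          (fun x => (φ - (∑ y, φ y) • delta0 p) (x 0) * fBasis p (m - 1) (seqTail x)) := by
    funext x
    simp only [G, hα, Function.comp_apply, Pi.add_apply, Pi.sub_apply, Pi.smul_apply, smul_eq_mul,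
      fBasis_mul hp, hg.seqTail_symm_apply, fBasis_mul_add hp (Nat.sub_lt hp.pos one_pos),
      bFun_sub_one_eq_delta0]
    ring
  rw [hsplit]
  refine add_mem (fBasisSpan_mono (Nat.le_add_right _ _) (fiberwise_mem_fBasisSpan hp fun y => ?_))
    (mul_fBasis_seqTail_mem_fBasisSpan hp (Nat.sub_le p 1) (sub_sum_smul_delta0_mem hp φ) (m - 1))
  exact hm _ (hg.tailPerm_isTriangular _)

theorem fBasis_comp_symm_sub_mem (hp : p.Prime) {n : ℕ} (hn : 0 < n)
    {g : Equiv.Perm (ℕ → ZMod p)} (hg : IsTriangular p g) :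
    fBasis p n ∘ g.symm - fBasis p n - alphaKal p g (padicValNat p n) • fBasis p (n - 1) ∈
      fBasisSpan p (n - 1) := by
  have : Fact p.Prime := ⟨hp⟩
  induction n using Nat.strong_induction_on generalizing g with
  | _ n ih =>
  obtain ⟨m, r, hrp, rfl⟩ : ∃ m r, r < p ∧ n = p * m + r :=
    ⟨n / p, n % p, Nat.mod_lt n hp.pos, (Nat.div_add_mod n p).symm⟩
  rcases Nat.eq_zero_or_pos r with rfl | hr0
  · have hm0 : 0 < m := Nat.pos_of_mul_pos_left hn
    have hmn : m < p * m := lt_mul_left hm0 hp.one_lt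
    have hpm : p * m = p * (m - 1) + p := by
      rw [← Nat.mul_add_one, Nat.sub_add_cancel hm0]
    rw [add_zero, padicValNat.mul hp.ne_zero hm0.ne', padicValNat.self hp.one_lt, add_comm,
      show p * m - 1 = p * (m - 1) + (p - 1) by omega]
    exact fBasis_comp_symm_sub_mem_of_dvd hp (fun g' hg' => ih m hmn hm0 hg') hg
  · have hndvd : ¬ p ∣ p * m + r :=
      (Nat.dvd_add_right (dvd_mul_right p m)).not.2 (Nat.not_dvd_of_pos_of_lt hr0 hrp)
    rw [padicValNat.eq_zero_of_not_dvd hndvd, hg.alphaKal_zero,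
      show p * m + r - 1 = p * m + (r - 1) by omega]
    refine fBasis_comp_symm_sub_mem_of_not_dvd hp hr0 hrp (fun g' hg' => ?_) hg
    rcases Nat.eq_zero_or_pos m with rfl | hm0
    · simp [fBasis_zero hp]
    · have hmn : m < p * m + r := (lt_mul_left hm0 hp.one_lt).trans_le (Nat.le_add_right _ _)
      have := add_mem (fBasisSpan_mono (Nat.sub_le m 1) (ih m hmn hm0 hg'))
        (Submodule.smul_mem _ (alphaKal p g' (padicValNat p m))
          (fBasis_mem_fBasisSpan (p := p) (Nat.sub_lt hm0 one_pos)))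
      rwa [sub_add_cancel] at this

end Superdiagonal

/-- for `g ∈ K_p` and `n ≥ 1`, with `k = v_p(n)` the `p`-adic valuation of
`n`, the function `f_n ∘ g⁻¹ − f_n − α_k(g) · f_{n−1}` lies in the span of
`{f_0, …, f_{n−2}}`; i.e. the entries of the first superdiagonal of the uni-triangular
matrix of `g` in the basis `(f_0, f_1, …)` are `s_n = α_{v_p(n)}(g)`. -/
theorem first_diagonal (p : ℕ) (hp : p.Prime) [NeZero p]
    (g : Equiv.Perm (ℕ → ZMod p)) (hg : IsTriangular p g) (n : ℕ) (hn : 1 ≤ n) :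
    (fun x => fBasis p n (g.symm x) - fBasis p n x -
        alphaKal p g (padicValNat p n) * fBasis p (n - 1) x) ∈
      Submodule.span (ZMod p) (fBasis p '' {m : ℕ | m + 2 ≤ n}) := by
  have hset : {m : ℕ | m + 2 ≤ n} = Set.Iio (n - 1) := by
    ext m
    change m + 2 ≤ n ↔ m < n - 1
    omega
  rw [hset]
  exact fBasis_comp_symm_sub_mem hp hn hg
end

section
/- Let p be a prime and let W be the ZMod p-vector space of all functions (ZMod p)^ℕ → ZMod p that depend only on finitely many coordinates (equivalently, the linear span of all Kaloujnine monomials e_n; equivalently, the continuous, i.e., locally constant, functions from (ZMod p)^ℕ to ZMod p). If V ⊆ W is a ZMod p-linear subspace invariant under the map f ↦ f ∘ g⁻¹ for every g ∈ K_p, then either V = {0}, or V = W, or V = U_n for some n ∈ ℕ. -/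
/-- `W`: the linear span of all Kaloujnine monomials, i.e. the space of functions
`(ZMod p)^ℕ → ZMod p` depending only on finitely many coordinates (equivalently, the
continuous = locally constant functions). -/
def Wspan (p : ℕ) : Submodule (ZMod p) ((ℕ → ZMod p) → ZMod p) :=
  Submodule.span (ZMod p) (Set.range (kalMonomial p))

/-!
Let `T_j f = f ∘ σ_j - f`, where the triangular map `σ_j` adds `∏_{i<j} x_i^{p-1}` to `x_j`.
Invariant subspaces are stable under every `T_j`. Each `T_j` strictly lowers the Kaloujnine
degree, and if `j` is the lowest nonzero base-`p` digit of `n + 1` then `T_j e_{n+1}` is a nonzero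
multiple of `e_n` modulo `U_{n-1}`: the carry from `n` to `n + 1` is exactly what `σ_j` undoes.
Hence if `V` contains an element of exact degree `m ≥ n`, repeated differencing shows that
`e_n ∈ V + U_{n-1}`, and inductively `U_n ≤ V`. So for every `n`, either `U_n ≤ V` or
`V ≤ U_{n-1}`, which leaves only `0`, the `U_n` and `W`.
-/

namespace Kaloujnine

open Finset

section Digits

def digit (p i n : ℕ) : ℕ := n / p ^ i % p

variable {p : ℕ}

lemma digit_lt [Fact (1 < p)] (i n : ℕ) : digit p i n < p :=
  Nat.mod_lt _ (Fact.out : 1 < p).le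

lemma digit_eq_zero_of_lt {i n : ℕ} (h : n < p ^ i) : digit p i n = 0 := by
  rw [digit, Nat.div_eq_of_lt h, Nat.zero_mod]

lemma sum_digit_mul_pow (s n : ℕ) : ∑ i ∈ range s, digit p i n * p ^ i = n % p ^ s := by
  induction s with
  | zero => simp [Nat.mod_one]
  | succ s ih => rw [sum_range_succ, ih, Nat.mod_pow_succ, digit, mul_comm (p ^ s)]

lemma sum_digit_mul_pow_of_lt {s n : ℕ} (h : n < p ^ s) :
    ∑ i ∈ range s, digit p i n * p ^ i = n := by
  rw [sum_digit_mul_pow, Nat.mod_eq_of_lt h]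

lemma lt_pow_self_of_le [Fact (1 < p)] {n s : ℕ} (h : n ≤ s) : n < p ^ s :=
  (Nat.lt_pow_self Fact.out).trans_le (Nat.pow_le_pow_right (Fact.out : 1 < p).le h)

lemma sum_mul_pow_lt {d : ℕ → ℕ} (hd : ∀ i, d i < p) (s : ℕ) :
    ∑ i ∈ range s, d i * p ^ i < p ^ s := by
  induction s with
  | zero => simp
  | succ s ih =>
    calc ∑ i ∈ range (s + 1), d i * p ^ i < (d s + 1) * p ^ s := by
          rw [sum_range_succ]; linarith
      _ ≤ p ^ (s + 1) := by rw [pow_succ']; exact Nat.mul_le_mul_right _ (hd s)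

lemma digit_sum_mul_pow {d : ℕ → ℕ} (hd : ∀ i, d i < p) (s k : ℕ) :
    digit p k (∑ i ∈ range s, d i * p ^ i) = if k < s then d k else 0 := by
  induction s generalizing d k with
  | zero => simp [digit]
  | succ s ih =>
    have hp : 0 < p := (Nat.zero_le _).trans_lt (hd 0)
    have hsum : ∑ i ∈ range (s + 1), d i * p ^ i = d 0 + p * ∑ i ∈ range s, d (i + 1) * p ^ i := by
      rw [sum_range_succ', mul_sum, add_comm]
      simp only [pow_succ, pow_zero, mul_one, ← mul_assoc, mul_comm p]
    rcases k with _ | k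
    · simp [digit, hsum, Nat.mod_eq_of_lt (hd 0)]
    · rw [hsum, digit, pow_succ', ← Nat.div_div_eq_div_mul, Nat.add_mul_div_left _ _ hp,
        Nat.div_eq_of_lt (hd 0), zero_add, ← digit, ih (fun i => hd (i + 1))]
      simp

end Digits

@[to_additive]
lemma prod_range_eq_mul_mul_prod_Ico {M : Type*} [CommMonoid M] (f : ℕ → M) {j s : ℕ}
    (hjs : j < s) : ∏ i ∈ range s, f i = (∏ i ∈ range j, f i) * f j * ∏ i ∈ Ico (j + 1) s, f i := by
  rw [← prod_range_succ, prod_range_mul_prod_Ico _ hjs]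

section Monomials

variable {p : ℕ} [Fact (1 < p)]

lemma prod_pow_digit_eq_of_le {n s t : ℕ} (hst : s ≤ t) (h : n < p ^ s) (x : ℕ → ZMod p) :
    ∏ i ∈ range t, x i ^ digit p i n = ∏ i ∈ range s, x i ^ digit p i n := by
  refine (prod_subset (range_subset_range.2 hst) fun i _ hi => ?_).symm
  have : p ^ s ≤ p ^ i := Nat.pow_le_pow_right (Fact.out : 1 < p).le (by simpa using hi)
  rw [digit_eq_zero_of_lt (h.trans_le this), pow_zero]

lemma kalMonomial_eq_prod {n s : ℕ} (h : n < p ^ s) (x : ℕ → ZMod p) :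
    kalMonomial p n x = ∏ i ∈ range s, x i ^ digit p i n := by
  have hn : n < p ^ (n + 1) := lt_pow_self_of_le n.le_succ
  rcases le_total s (n + 1) with hs | hs
  · exact prod_pow_digit_eq_of_le hs h x
  · exact (prod_pow_digit_eq_of_le hs hn x).symm

lemma prod_pow_eq_kalMonomial {d : ℕ → ℕ} (hd : ∀ i, d i < p) (s : ℕ) (x : ℕ → ZMod p) :
    ∏ i ∈ range s, x i ^ d i = kalMonomial p (∑ i ∈ range s, d i * p ^ i) x := by
  rw [kalMonomial_eq_prod (sum_mul_pow_lt hd s)]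
  refine prod_congr rfl fun i hi => ?_
  rw [digit_sum_mul_pow hd, if_pos (mem_range.1 hi)]

end Monomials

section Filtration

variable (p : ℕ)

def Ult (n : ℕ) : Submodule (ZMod p) ((ℕ → ZMod p) → ZMod p) :=
  Submodule.span (ZMod p) (kalMonomial p '' Set.Iio n)

lemma Ult_mono : Monotone (Ult p) := fun _ _ h =>
  Submodule.span_mono (Set.image_mono (Set.Iio_subset_Iio h))

@[simp]
lemma Ult_zero : Ult p 0 = ⊥ := by
  simp [Ult]

variable {p}

lemma kalMonomial_mem_Ult {m n : ℕ} (h : m < n) : kalMonomial p m ∈ Ult p n :=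
  Submodule.subset_span ⟨m, h, rfl⟩

lemma Ult_succ (n : ℕ) :
    Ult p (n + 1) =
      Submodule.span (ZMod p) (insert (kalMonomial p n) (kalMonomial p '' Set.Iio n)) := by
  rw [Ult, ← Order.succ_eq_add_one, Order.Iio_succ, ← Set.Iio_insert, Set.image_insert_eq]

lemma mem_Ult_succ_iff {f : (ℕ → ZMod p) → ZMod p} {n : ℕ} :
    f ∈ Ult p (n + 1) ↔ ∃ c : ZMod p, ∃ z ∈ Ult p n, f = c • kalMonomial p n + z := by
  rw [Ult_succ, Submodule.mem_span_insert, Ult]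

lemma Ult_succ_le_iff {V : Submodule (ZMod p) ((ℕ → ZMod p) → ZMod p)} {n : ℕ} :
    Ult p (n + 1) ≤ V ↔ kalMonomial p n ∈ V ∧ Ult p n ≤ V := by
  rw [Ult_succ, Submodule.span_le, Set.insert_subset_iff, Ult, Submodule.span_le, SetLike.mem_coe]

lemma Uspan_eq_Ult (n : ℕ) : Uspan p n = Ult p (n + 1) := by
  rw [Uspan, Ult, ← Order.succ_eq_add_one, Order.Iio_succ]
  rfl

lemma Wspan_eq_iSup_Ult : Wspan p = ⨆ n, Ult p n := by
  have : Set.range (kalMonomial p) = ⋃ n, kalMonomial p '' Set.Iio n := by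
    ext f
    simp only [Set.mem_range, Set.mem_iUnion, Set.mem_image, Set.mem_Iio]
    exact ⟨fun ⟨m, hm⟩ => ⟨m + 1, m, m.lt_succ_self, hm⟩, fun ⟨_, m, _, hm⟩ => ⟨m, hm⟩⟩
  rw [Wspan, this, Submodule.span_iUnion]
  rfl

lemma exists_mem_Ult_of_mem_Wspan {f : (ℕ → ZMod p) → ZMod p} (hf : f ∈ Wspan p) :
    ∃ n, f ∈ Ult p n := by
  rw [Wspan_eq_iSup_Ult] at hf
  exact (Submodule.mem_iSup_of_directed _ (Ult_mono p).directed_le).1 hf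

end Filtration

section Twist

variable {p : ℕ}

/-- For `p` prime, `x i ^ (p - 1)` is the indicator of `x i ≠ 0`, so this adds `e` to `x j`
exactly when `x_0, …, x_{j-1}` are all nonzero. -/
def twist (p j : ℕ) (e : ZMod p) (x : ℕ → ZMod p) : ℕ → ZMod p :=
  Function.update x j (x j + e * ∏ i ∈ range j, x i ^ (p - 1))

lemma twist_apply_of_ne {i j : ℕ} (h : i ≠ j) (e : ZMod p) (x : ℕ → ZMod p) :
    twist p j e x i = x i :=
  Function.update_of_ne h _ _

lemma twist_apply_self (j : ℕ) (e : ZMod p) (x : ℕ → ZMod p) :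
    twist p j e x j = x j + e * ∏ i ∈ range j, x i ^ (p - 1) :=
  Function.update_self _ _ _

lemma twist_twist (j : ℕ) (e d : ZMod p) (x : ℕ → ZMod p) :
    twist p j e (twist p j d x) = twist p j (e + d) x := by
  have hlow : ∏ i ∈ range j, twist p j d x i ^ (p - 1) = ∏ i ∈ range j, x i ^ (p - 1) :=
    prod_congr rfl fun i hi => by rw [twist_apply_of_ne (mem_range.1 hi).ne]
  ext i
  rcases eq_or_ne i j with rfl | h
  · simp only [twist_apply_self, hlow]
    ring
  · simp only [twist_apply_of_ne h]

lemma twist_zero (j : ℕ) (x : ℕ → ZMod p) : twist p j 0 x = x := by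
  simp [twist]

def twistEquiv (p j : ℕ) (e : ZMod p) : Equiv.Perm (ℕ → ZMod p) where
  toFun := twist p j e
  invFun := twist p j (-e)
  left_inv x := by simp [twist_twist, twist_zero]
  right_inv x := by simp [twist_twist, twist_zero]

lemma isTriangular_twistEquiv (j : ℕ) (e : ZMod p) : IsTriangular p (twistEquiv p j e) := by
  refine ⟨fun n y => if h : n = j then e * ∏ i : Fin j, y (Fin.cast h.symm i) ^ (p - 1) else 0,
    fun x n => ?_⟩
  rcases eq_or_ne n j with rfl | h
  · simp [twistEquiv, twist_apply_self, prod_range fun i => x i ^ (p - 1)]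
  · simp [twistEquiv, twist_apply_of_ne h, h]

variable (p) in
def twistDiff (j : ℕ) : ((ℕ → ZMod p) → ZMod p) →ₗ[ZMod p] ((ℕ → ZMod p) → ZMod p) where
  toFun f := f ∘ twist p j 1 - f
  map_add' f g := by ext; simp; ring
  map_smul' c f := by ext; simp; ring

lemma twistDiff_mem {V : Submodule (ZMod p) ((ℕ → ZMod p) → ZMod p)}
    (hinv : ∀ g : Equiv.Perm (ℕ → ZMod p), IsTriangular p g → ∀ f ∈ V, (fun x => f (g.symm x)) ∈ V)
    (j : ℕ) {f : (ℕ → ZMod p) → ZMod p} (hf : f ∈ V) : twistDiff p j f ∈ V := by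
  have hg := hinv _ (isTriangular_twistEquiv j (-1)) f hf
  simp only [twistEquiv, Equiv.coe_fn_symm_mk, neg_neg] at hg
  exact V.sub_mem hg hf

end Twist

section Expansion

variable {p : ℕ}

/-- The digits of the monomials in `twistDiff p j (kalMonomial p m)`: digit `j` drops to `t`, and
a zero digit below `j` becomes `p - 1`, because `x ^ (p - 1) * x ^ d = x ^ d` for `d ≠ 0`. -/
def twistDigit (p j m t i : ℕ) : ℕ :=
  if i < j then (if digit p i m = 0 then p - 1 else digit p i m)
  else if i = j then t else digit p i m

/-- The range covers position `j` and all nonzero digits of `m`. -/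
def twistIndex (p j m t : ℕ) : ℕ := ∑ i ∈ range (m + j + 1), twistDigit p j m t i * p ^ i

lemma twistDigit_lt [Fact (1 < p)] {j m t : ℕ} (ht : t < p) (i : ℕ) : twistDigit p j m t i < p := by
  have := digit_lt (p := p) i m
  unfold twistDigit
  split_ifs <;> omega

lemma pow_sub_one_mul_pow [Fact p.Prime] (x : ZMod p) (d : ℕ) :
    x ^ (p - 1) * x ^ d = x ^ (if d = 0 then p - 1 else d) := by
  rcases eq_or_ne x 0 with rfl | hx
  · have := (Fact.out : p.Prime).two_le
    split_ifs with hd <;> simp [hd, zero_pow, show p - 1 ≠ 0 by omega]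
  · rw [ZMod.pow_card_sub_one_eq_one hx, one_mul]
    split_ifs with hd <;> simp [hd, ZMod.pow_card_sub_one_eq_one hx]

lemma pow_sub_one_eq_zero_or_one [Fact p.Prime] (x : ZMod p) :
    x ^ (p - 1) = 0 ∨ x ^ (p - 1) = 1 := by
  rw [ZMod.pow_card_sub_one]
  split_ifs <;> simp

lemma kalMonomial_eq_mul_mul [Fact (1 < p)] (j m : ℕ) (x : ℕ → ZMod p) :
    kalMonomial p m x = (∏ i ∈ range j, x i ^ digit p i m) * x j ^ digit p j m *
      ∏ i ∈ Ico (j + 1) (m + j + 1), x i ^ digit p i m := by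
  rw [kalMonomial_eq_prod (lt_pow_self_of_le (m.le_add_right j |>.trans (m + j).le_succ)),
    prod_range_eq_mul_mul_prod_Ico _ (by omega : j < m + j + 1)]

lemma kalMonomial_twistIndex [Fact p.Prime] {j m t : ℕ} (ht : t < p) (x : ℕ → ZMod p) :
    kalMonomial p (twistIndex p j m t) x = (∏ i ∈ range j, x i ^ (p - 1)) *
      (∏ i ∈ range j, x i ^ digit p i m) * x j ^ t *
        ∏ i ∈ Ico (j + 1) (m + j + 1), x i ^ digit p i m := by
  have hlow : ∏ i ∈ range j, x i ^ twistDigit p j m t i =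
      (∏ i ∈ range j, x i ^ (p - 1)) * ∏ i ∈ range j, x i ^ digit p i m := by
    rw [← prod_mul_distrib]
    refine prod_congr rfl fun i hi => ?_
    rw [pow_sub_one_mul_pow, twistDigit, if_pos (mem_range.1 hi)]
  have hhigh : ∏ i ∈ Ico (j + 1) (m + j + 1), x i ^ twistDigit p j m t i =
      ∏ i ∈ Ico (j + 1) (m + j + 1), x i ^ digit p i m := by
    refine prod_congr rfl fun i hi => ?_
    have := (mem_Ico.1 hi).1
    rw [twistDigit, if_neg (by omega), if_neg (by omega)]
  rw [twistIndex, ← prod_pow_eq_kalMonomial (twistDigit_lt ht),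
    prod_range_eq_mul_mul_prod_Ico _ (by omega : j < m + j + 1), hlow, hhigh]
  simp [twistDigit]

lemma add_one_pow_sub_pow {R : Type*} [CommRing R] (x : R) (d : ℕ) :
    (x + 1) ^ d - x ^ d = ∑ t ∈ range d, (d.choose t : R) * x ^ t := by
  rw [add_pow, sum_range_succ, Nat.choose_self, add_sub_assoc]
  simp [mul_comm]

theorem twistDiff_kalMonomial [Fact p.Prime] (j m : ℕ) :
    twistDiff p j (kalMonomial p m) =
      ∑ t ∈ range (digit p j m), ((digit p j m).choose t : ZMod p) •
        kalMonomial p (twistIndex p j m t) := by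
  ext x
  set u := ∏ i ∈ range j, x i ^ (p - 1)
  have hu : u = 0 ∨ u = 1 :=
    prod_induction _ (fun v => v = 0 ∨ v = 1) (by rintro _ _ (rfl | rfl) (rfl | rfl) <;> simp)
      (Or.inr rfl) fun i _ => pow_sub_one_eq_zero_or_one (x i)
  have hlow : ∏ i ∈ range j, twist p j 1 x i ^ digit p i m = ∏ i ∈ range j, x i ^ digit p i m :=
    prod_congr rfl fun i hi => by rw [twist_apply_of_ne (mem_range.1 hi).ne]
  have hhigh : ∏ i ∈ Ico (j + 1) (m + j + 1), twist p j 1 x i ^ digit p i m =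
      ∏ i ∈ Ico (j + 1) (m + j + 1), x i ^ digit p i m :=
    prod_congr rfl fun i hi => by rw [twist_apply_of_ne (by have := (mem_Ico.1 hi).1; omega)]
  have hjump : (x j + u) ^ digit p j m - x j ^ digit p j m =
      u * ∑ t ∈ range (digit p j m), ((digit p j m).choose t : ZMod p) * x j ^ t := by
    rw [← add_one_pow_sub_pow]
    rcases hu with hu | hu <;> simp [hu]
  have hterm (t : ℕ) (ht : t ∈ range (digit p j m)) :
      kalMonomial p (twistIndex p j m t) x = u * (∏ i ∈ range j, x i ^ digit p i m) * x j ^ t *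
        ∏ i ∈ Ico (j + 1) (m + j + 1), x i ^ digit p i m :=
    kalMonomial_twistIndex ((mem_range.1 ht).trans (digit_lt j m)) x
  simp only [twistDiff, LinearMap.coe_mk, AddHom.coe_mk, Pi.sub_apply, Function.comp_apply,
    Finset.sum_apply, Pi.smul_apply, smul_eq_mul]
  rw [kalMonomial_eq_mul_mul j, kalMonomial_eq_mul_mul j m x, hlow, hhigh, twist_apply_self,
    one_mul, sum_congr rfl fun t ht => by rw [hterm t ht], ← sub_mul, ← mul_sub, hjump]
  simp only [mul_sum, sum_mul]
  exact sum_congr rfl fun t _ => by ring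

end Expansion

section Lowering

variable {p : ℕ}

lemma twistIndex_eq (j m t : ℕ) : twistIndex p j m t =
    ∑ i ∈ range j, twistDigit p j m t i * p ^ i + t * p ^ j +
      ∑ i ∈ Ico (j + 1) (m + j + 1), digit p i m * p ^ i := by
  rw [twistIndex, sum_range_eq_add_add_sum_Ico _ (by omega : j < m + j + 1)]
  congr 1
  · simp [twistDigit]
  · refine sum_congr rfl fun i hi => ?_
    have := (mem_Ico.1 hi).1
    rw [twistDigit, if_neg (by omega), if_neg (by omega)]

lemma eq_sum_digit_add_add [Fact (1 < p)] (j m : ℕ) : m =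
    ∑ i ∈ range j, digit p i m * p ^ i + digit p j m * p ^ j +
      ∑ i ∈ Ico (j + 1) (m + j + 1), digit p i m * p ^ i := by
  rw [← sum_range_eq_add_add_sum_Ico _ (by omega : j < m + j + 1),
    sum_digit_mul_pow_of_lt (lt_pow_self_of_le (by omega))]

lemma twistIndex_lt [Fact (1 < p)] {j m t : ℕ} (ht : t < digit p j m) : twistIndex p j m t < m := by
  have hlow := sum_mul_pow_lt (twistDigit_lt (j := j) (m := m) (ht.trans (digit_lt j m))) j
  have hdigit : t * p ^ j + p ^ j ≤ digit p j m * p ^ j := by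
    rw [← add_one_mul]
    exact Nat.mul_le_mul_right _ ht
  rw [twistIndex_eq]
  conv_rhs => rw [eq_sum_digit_add_add (p := p) j m]
  omega

/-- Here the digits below `j` all become `p - 1`, which is the borrow in `m - 1`. -/
lemma twistIndex_add_of_digit_eq_zero [Fact (1 < p)] {j m t : ℕ} (hlow : ∀ i < j, digit p i m = 0)
    (ht : t < digit p j m) : twistIndex p j m t + 1 + (digit p j m - 1 - t) * p ^ j = m := by
  have hp : 1 ≤ p := (Fact.out : 1 < p).le
  have hgeom : ∑ i ∈ range j, twistDigit p j m t i * p ^ i + 1 = p ^ j := by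
    have hsum : ∑ i ∈ range j, twistDigit p j m t i * p ^ i = (∑ i ∈ range j, p ^ i) * (p - 1) := by
      rw [sum_mul]
      refine sum_congr rfl fun i hi => ?_
      rw [twistDigit, if_pos (mem_range.1 hi), if_pos (hlow i (mem_range.1 hi)), mul_comm]
    rw [hsum, geom_sum_mul_of_one_le hp, Nat.sub_add_cancel (Nat.one_le_pow _ _ hp)]
  have hzero : ∑ i ∈ range j, digit p i m * p ^ i = 0 :=
    sum_eq_zero fun i hi => by rw [hlow i (mem_range.1 hi), zero_mul]
  obtain ⟨k, hk⟩ : ∃ k, digit p j m = t + 1 + k := ⟨digit p j m - 1 - t, by omega⟩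
  conv_rhs => rw [eq_sum_digit_add_add (p := p) j m, hzero, hk]
  rw [twistIndex_eq, hk, show t + 1 + k - 1 - t = k by omega, ← hgeom]
  ring

variable [Fact p.Prime]

lemma twistDiff_kalMonomial_mem_Ult (j m : ℕ) : twistDiff p j (kalMonomial p m) ∈ Ult p m := by
  rw [twistDiff_kalMonomial]
  exact Submodule.sum_mem _ fun t ht =>
    Submodule.smul_mem _ _ (kalMonomial_mem_Ult (twistIndex_lt (mem_range.1 ht)))

lemma twistDiff_mem_Ult {n : ℕ} (j : ℕ) {f : (ℕ → ZMod p) → ZMod p} (hf : f ∈ Ult p (n + 1)) :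
    twistDiff p j f ∈ Ult p n := by
  suffices Ult p (n + 1) ≤ (Ult p n).comap (twistDiff p j) from this hf
  rw [Ult, Submodule.span_le]
  rintro _ ⟨m, hm, rfl⟩
  exact Ult_mono p (Nat.lt_succ_iff.1 hm) (twistDiff_kalMonomial_mem_Ult j m)

/-- Taking `j` to be the lowest nonzero digit of `n + 1`, the top term of `twistDiff p j e_{n+1}`
is a nonzero multiple of `e_n`. -/
lemma exists_twistDiff_kalMonomial_succ (n : ℕ) : ∃ j, ∃ c : ZMod p, c ≠ 0 ∧
    twistDiff p j (kalMonomial p (n + 1)) - c • kalMonomial p n ∈ Ult p n := by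
  classical
  have hex : ∃ j, digit p j (n + 1) ≠ 0 := by
    by_contra! h
    have := sum_digit_mul_pow_of_lt (lt_pow_self_of_le (p := p) le_rfl (n := n + 1))
    simp [h] at this
  set j := Nat.find hex
  have hlow (i : ℕ) (hi : i < j) : digit p i (n + 1) = 0 := not_not.1 (Nat.find_min hex hi)
  obtain ⟨k, hk⟩ : ∃ k, digit p j (n + 1) = k + 1 :=
    Nat.exists_eq_add_one_of_ne_zero (Nat.find_spec hex)
  have hkp : k + 1 < p := hk ▸ digit_lt j (n + 1)
  refine ⟨j, (k + 1 : ℕ), ?_, ?_⟩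
  · rw [Ne, ZMod.natCast_eq_zero_iff]
    exact fun hdvd => (Nat.le_of_dvd k.succ_pos hdvd).not_gt hkp
  · have hindex (t : ℕ) (ht : t ≤ k) : twistIndex p j (n + 1) t + 1 + (k - t) * p ^ j = n + 1 := by
      simpa [hk] using twistIndex_add_of_digit_eq_zero hlow (t := t) (by omega)
    have htop : twistIndex p j (n + 1) k = n := by simpa using hindex k le_rfl
    rw [twistDiff_kalMonomial, hk, sum_range_succ, Nat.choose_succ_self_right, htop,
      add_sub_cancel_right]
    refine Submodule.sum_mem _ fun t ht => Submodule.smul_mem _ _ (kalMonomial_mem_Ult ?_)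
    have ht' := mem_range.1 ht
    have := hindex t ht'.le
    have hpj : 1 ≤ (k - t) * p ^ j :=
      Nat.one_le_iff_ne_zero.2 (mul_ne_zero (by omega) (pow_ne_zero _ (Fact.out : p.Prime).ne_zero))
    omega

end Lowering

section Invariant

variable {p : ℕ} [Fact p.Prime] {V : Submodule (ZMod p) ((ℕ → ZMod p) → ZMod p)}

lemma kalMonomial_mem_sup_Ult_of_succ (hV : ∀ j, ∀ f ∈ V, twistDiff p j f ∈ V) {n : ℕ}
    (h : kalMonomial p (n + 1) ∈ V ⊔ Ult p (n + 1)) : kalMonomial p n ∈ V ⊔ Ult p n := by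
  obtain ⟨j, c, hc, hlead⟩ := exists_twistDiff_kalMonomial_succ (p := p) n
  have hT : twistDiff p j (kalMonomial p (n + 1)) ∈ V ⊔ Ult p n := by
    obtain ⟨v, hv, z, hz, hvz⟩ := Submodule.mem_sup.1 h
    rw [← hvz, map_add]
    exact Submodule.add_mem_sup (hV j v hv) (twistDiff_mem_Ult j hz)
  rw [← Submodule.smul_mem_iff _ hc]
  simpa using Submodule.sub_mem _ hT (Submodule.mem_sup_right hlead)

lemma kalMonomial_mem_sup_Ult_of_le (hV : ∀ j, ∀ f ∈ V, twistDiff p j f ∈ V) {n k : ℕ}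
    (hnk : n ≤ k) (h : kalMonomial p k ∈ V ⊔ Ult p k) : kalMonomial p n ∈ V ⊔ Ult p n := by
  induction k, hnk using Nat.le_induction with
  | base => exact h
  | succ k _ ih => exact ih (kalMonomial_mem_sup_Ult_of_succ hV h)

lemma Ult_succ_le_of_kalMonomial_mem_sup (hV : ∀ j, ∀ f ∈ V, twistDiff p j f ∈ V) {n : ℕ}
    (h : kalMonomial p n ∈ V ⊔ Ult p n) : Ult p (n + 1) ≤ V := by
  induction n with
  | zero => simpa [Ult_succ_le_iff] using h
  | succ n ih =>
    have hle := ih (kalMonomial_mem_sup_Ult_of_succ hV h)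
    rw [sup_eq_left.2 hle] at h
    exact Ult_succ_le_iff.2 ⟨h, hle⟩

/-- If some `f ∈ V` had `e_m` (`m ≥ n`) as its top monomial, descending from `e_m` would give
`e_n ∈ V ⊔ Ult p n`. -/
theorem Ult_succ_le_or_le_Ult (hVW : V ≤ Wspan p) (hV : ∀ j, ∀ f ∈ V, twistDiff p j f ∈ V)
    (n : ℕ) : Ult p (n + 1) ≤ V ∨ V ≤ Ult p n := by
  by_cases h : kalMonomial p n ∈ V ⊔ Ult p n
  · exact Or.inl (Ult_succ_le_of_kalMonomial_mem_sup hV h)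
  refine Or.inr fun f hf => ?_
  obtain ⟨m, hfm⟩ := exists_mem_Ult_of_mem_Wspan (hVW hf)
  induction m with
  | zero => simp_all
  | succ m ih =>
    rcases lt_or_ge m n with hmn | hnm
    · exact Ult_mono p hmn hfm
    obtain ⟨c, z, hz, hfz⟩ := mem_Ult_succ_iff.1 hfm
    obtain rfl : c = 0 := by
      by_contra hc
      refine h (kalMonomial_mem_sup_Ult_of_le hV hnm ?_)
      rw [← Submodule.smul_mem_iff _ hc, ← add_sub_cancel_right (c • kalMonomial p m) z, ← hfz]
      exact Submodule.sub_mem _ (Submodule.mem_sup_left hf) (Submodule.mem_sup_right hz)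
    exact ih (by simpa [hfz] using hz)

end Invariant

end Kaloujnine

open Kaloujnine

/-- if `V ⊆ W` is a `ZMod p`-linear subspace invariant under `f ↦ f ∘ g⁻¹`
for every `g ∈ K_p`, then `V = {0}`, or `V = W`, or `V = U_n` for some `n`. -/
theorem Kp_submodule_classification (p : ℕ) (hp : p.Prime)
    (V : Submodule (ZMod p) ((ℕ → ZMod p) → ZMod p))
    (hVW : V ≤ Wspan p)
    (hinv : ∀ g : Equiv.Perm (ℕ → ZMod p), IsTriangular p g →
      ∀ f ∈ V, (fun x => f (g.symm x)) ∈ V) :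
    V = ⊥ ∨ V = Wspan p ∨ ∃ n : ℕ, V = Uspan p n := by
  have : Fact p.Prime := ⟨hp⟩
  have hV : ∀ j, ∀ f ∈ V, twistDiff p j f ∈ V := fun j _ hf => twistDiff_mem hinv j hf
  by_cases hall : ∀ n, Ult p (n + 1) ≤ V
  · refine Or.inr (Or.inl (le_antisymm hVW ?_))
    rw [Wspan_eq_iSup_Ult]
    exact iSup_le fun n => (Ult_mono p n.le_succ).trans (hall n)
  classical
  push Not at hall
  have hVn : V ≤ Ult p (Nat.find hall) :=
    (Ult_succ_le_or_le_Ult hVW hV _).resolve_left (Nat.find_spec hall)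
  rcases hn : Nat.find hall with _ | n
  · exact Or.inl (eq_bot_iff.2 (by simpa [hn] using hVn))
  · have hle : Ult p (n + 1) ≤ V := not_not.1 (Nat.find_min hall (by omega))
    exact Or.inr (Or.inr ⟨n, by rw [Uspan_eq_Ult]; exact le_antisymm (hn ▸ hVn) hle⟩)
end
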